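/- arXiv:2209.00100 — 7 statements merged into one kernel-verified Lean document; each statement's English description precedes it below -/
import Mathlib

section
/- Suppose (u,v) solves the ODE system and ε u(0) + Q(v(0)) ≤ Q_M for some constant Q_M > Q(μ). Then v is nonincreasing on [0,∞), Q(v(t)) ≤ Q_M for every t ≥ 0, and consequently s₋ ≤ v(t) ≤ s₊ for every t ≥ 0, where 0 < s₋ < μ < s₊ are the two solutions of Q(s) = Q_M. -/
open Real Filter Topology

/-- `(u, v)` solves the ODE system `u' = ε⁻¹ u (v - μ)`, `v' = -u v` on `[0, ∞)`,
with both components positive. -/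
structure IsODESol (μ ε : ℝ) (u v : ℝ → ℝ) : Prop where
  u_pos : ∀ t, 0 ≤ t → 0 < u t
  v_pos : ∀ t, 0 ≤ t → 0 < v t
  u_eq : ∀ t, 0 ≤ t → HasDerivAt u (ε⁻¹ * u t * (v t - μ)) t
  v_eq : ∀ t, 0 ≤ t → HasDerivAt v (-(u t * v t)) t

/-- `Q(s) = s - μ ln s`. -/
noncomputable def Q (μ s : ℝ) : ℝ := s - μ * Real.log s

/-!
`ε u + Q(v)` is a first integral of the system: along solutions its derivative is
`u (v - μ) - (1 - μ / v) u v = 0`. Since `ε u > 0`, this gives `Q(v(t)) < ε u(0) + Q(v(0)) ≤ Q_M`,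
and the sublevel set `{Q ≤ Q_M}` is `[s₋, s₊]` because `Q` decreases on `(0, μ]` and increases
on `[μ, ∞)`. Monotonicity of `v` is immediate from `v' = -u v < 0`.
-/

lemma Q_hasDerivAt (μ : ℝ) {s : ℝ} (hs : 0 < s) : HasDerivAt (Q μ) (1 - μ / s) s := by
  rw [div_eq_mul_inv]
  exact (hasDerivAt_id' s).sub ((Real.hasDerivAt_log hs.ne').const_mul μ)

lemma Q_strictAntiOn (μ : ℝ) : StrictAntiOn (Q μ) (Set.Ioc 0 μ) := by
  refine strictAntiOn_of_deriv_neg (convex_Ioc 0 μ)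
    (fun x hx => (Q_hasDerivAt μ hx.1).continuousAt.continuousWithinAt) fun x hx => ?_
  rw [interior_Ioc] at hx
  rw [(Q_hasDerivAt μ hx.1).deriv, sub_neg, one_lt_div hx.1]
  exact hx.2

lemma Q_strictMonoOn {μ : ℝ} (hμ : 0 < μ) : StrictMonoOn (Q μ) (Set.Ici μ) := by
  refine strictMonoOn_of_deriv_pos (convex_Ici μ)
    (fun x hx => (Q_hasDerivAt μ (hμ.trans_le hx)).continuousAt.continuousWithinAt) fun x hx => ?_
  rw [interior_Ici] at hx
  rw [(Q_hasDerivAt μ (hμ.trans hx)).deriv, sub_pos, div_lt_one (hμ.trans hx)]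
  exact hx

lemma mem_Icc_of_Q_le {μ s s₁ s₂ : ℝ} (hμ : 0 < μ) (hs : 0 < s) (hs₁ : s₁ ≤ μ) (hs₂ : μ ≤ s₂)
    (hQs₁ : Q μ s ≤ Q μ s₁) (hQs₂ : Q μ s ≤ Q μ s₂) : s ∈ Set.Icc s₁ s₂ := by
  constructor
  · by_contra! h
    exact (Q_strictAntiOn μ ⟨hs, (h.trans_le hs₁).le⟩ ⟨hs.trans h, hs₁⟩ h).not_ge hQs₁
  · by_contra! h
    exact (Q_strictMonoOn hμ hs₂ (hs₂.trans h.le) h).not_ge hQs₂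

namespace IsODESol

variable {μ ε : ℝ} {u v : ℝ → ℝ}

lemma hasDerivAt_energy (hsol : IsODESol μ ε u v) (hε : ε ≠ 0) {t : ℝ} (ht : 0 ≤ t) :
    HasDerivAt (fun s => ε * u s + Q μ (v s)) 0 t := by
  have hv := (hsol.v_pos t ht).ne'
  refine (((hsol.u_eq t ht).const_mul ε).add ((Q_hasDerivAt μ (hsol.v_pos t ht)).comp t
    (hsol.v_eq t ht))).congr_deriv ?_
  field_simp
  ring

lemma energy_eq (hsol : IsODESol μ ε u v) (hε : ε ≠ 0) {t : ℝ} (ht : 0 ≤ t) :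
    ε * u t + Q μ (v t) = ε * u 0 + Q μ (v 0) :=
  constant_of_has_deriv_right_zero
    (fun _ hx => (hsol.hasDerivAt_energy hε hx.1).continuousAt.continuousWithinAt)
    (fun _ hx => (hsol.hasDerivAt_energy hε hx.1).hasDerivWithinAt) t ⟨ht, le_rfl⟩

lemma strictAntiOn_v (hsol : IsODESol μ ε u v) : StrictAntiOn v (Set.Ici 0) := by
  refine strictAntiOn_of_deriv_neg (convex_Ici 0)
    (fun x hx => (hsol.v_eq x hx).continuousAt.continuousWithinAt) fun x hx => ?_
  rw [interior_Ici] at hx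
  rw [(hsol.v_eq x hx.le).deriv, neg_lt_zero]
  exact mul_pos (hsol.u_pos x hx.le) (hsol.v_pos x hx.le)

lemma Q_v_lt (hsol : IsODESol μ ε u v) (hε : 0 < ε) {t : ℝ} (ht : 0 ≤ t) :
    Q μ (v t) < ε * u 0 + Q μ (v 0) := by
  rw [← hsol.energy_eq hε.ne' ht]
  linarith [mul_pos hε (hsol.u_pos t ht)]

end IsODESol

theorem Q_bound_and_v_bounds_general (μ ε QM : ℝ) (hμ : 0 < μ) (hε : 0 < ε)
    (u v : ℝ → ℝ) (hsol : IsODESol μ ε u v)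
    (hinit : ε * u 0 + Q μ (v 0) ≤ QM)
    (s₁ s₂ : ℝ) (hs₁ : s₁ < μ) (hs₂ : μ < s₂)
    (hQs₁ : Q μ s₁ = QM) (hQs₂ : Q μ s₂ = QM) :
    AntitoneOn v (Set.Ici 0) ∧
    (∀ t, 0 ≤ t → Q μ (v t) ≤ QM) ∧
    (∀ t, 0 ≤ t → s₁ ≤ v t ∧ v t ≤ s₂) := by
  have hQv : ∀ t, 0 ≤ t → Q μ (v t) ≤ QM := fun t ht =>
    ((hsol.Q_v_lt hε ht).trans_le hinit).le
  refine ⟨hsol.strictAntiOn_v.antitoneOn, hQv, fun t ht => ?_⟩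
  exact mem_Icc_of_Q_le hμ (hsol.v_pos t ht) hs₁.le hs₂.le (hQs₁ ▸ hQv t ht) (hQs₂ ▸ hQv t ht)

/-- If `ε u(0) + Q(v(0)) ≤ Q_M` with `Q_M > Q(μ)`, then `v` is nonincreasing,
`Q(v(t)) ≤ Q_M` for all `t ≥ 0`, and `s₋ ≤ v(t) ≤ s₊` where `0 < s₋ < μ < s₊`
are the two solutions of `Q(s) = Q_M`. -/
theorem Q_bound_and_v_bounds (μ ε QM : ℝ) (hμ : 0 < μ) (hε : 0 < ε)
    (u v : ℝ → ℝ) (hsol : IsODESol μ ε u v)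
    (hQM : Q μ μ < QM) (hinit : ε * u 0 + Q μ (v 0) ≤ QM)
    (s₁ s₂ : ℝ) (hs₁pos : 0 < s₁) (hs₁ : s₁ < μ) (hs₂ : μ < s₂)
    (hQs₁ : Q μ s₁ = QM) (hQs₂ : Q μ s₂ = QM) :
    AntitoneOn v (Set.Ici 0) ∧
    (∀ t, 0 ≤ t → Q μ (v t) ≤ QM) ∧
    (∀ t, 0 ≤ t → s₁ ≤ v t ∧ v t ≤ s₂) :=
  Q_bound_and_v_bounds_general μ ε QM hμ hε u v hsol hinit s₁ s₂ hs₁ hs₂ hQs₁ hQs₂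
end

section
/- For each ε ∈ (0,1], let (u_ε, v_ε) solve the ODE system with initial data u_ε(0) = exp(φ⁰_ε/ε) and v_ε(0) = v⁰_ε, where v⁰_ε < μ for all ε, φ⁰_ε → φ⁰ < 0 and v⁰_ε → v⁰ < μ as ε → 0. Then: (a) for every t ≥ 0 and every ε, u_ε(t) ≤ exp((φ⁰_ε + (v⁰_ε − μ)t)/ε); (b) for every t > 0, u_ε(t) → 0 as ε → 0; (c) for every t ≥ 0, v_ε(t) → v⁰ as ε → 0. -/
/-!
Along a solution `v` decreases, so `(log u)' = (v - μ)/ε ≤ (v⁰ - μ)/ε`, which integrates to the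
bound (a). When `v⁰ ≤ μ` this makes `u` decreasing, so `u_ε(t) ≤ u_ε(0) = exp(φ⁰_ε/ε) → 0`, giving
(b); and `|v'| = u v ≤ u_ε(0) v⁰_ε` gives `|v_ε(t) - v⁰_ε| ≤ exp(φ⁰_ε/ε) v⁰_ε t → 0`, giving (c).
-/

open Real Filter Topology

open Set

theorem antitoneOn_Ici_of_hasDerivAt {a : ℝ} {f f' : ℝ → ℝ}
    (hf : ∀ t, a ≤ t → HasDerivAt f (f' t) t) (hf' : ∀ t, a < t → f' t ≤ 0) :
    AntitoneOn f (Ici a) := by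
  refine antitoneOn_of_hasDerivWithinAt_nonpos (f' := f') (convex_Ici a)
    (fun t ht => (hf t ht).continuousAt.continuousWithinAt) (fun t ht => ?_) (fun t ht => ?_)
  · rw [interior_Ici] at ht
    exact (hf t ht.le).hasDerivWithinAt
  · rw [interior_Ici] at ht
    exact hf' t ht

namespace IsODESol

variable {μ ε : ℝ} {u v : ℝ → ℝ}

theorem antitoneOn_v (h : IsODESol μ ε u v) : AntitoneOn v (Ici 0) :=
  antitoneOn_Ici_of_hasDerivAt h.v_eq fun t ht =>
    neg_nonpos.2 (mul_pos (h.u_pos t ht.le) (h.v_pos t ht.le)).le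

theorem v_le_v_zero (h : IsODESol μ ε u v) {t : ℝ} (ht : 0 ≤ t) : v t ≤ v 0 :=
  h.antitoneOn_v self_mem_Ici ht ht

theorem antitoneOn_log_u_sub (h : IsODESol μ ε u v) (hε : 0 ≤ ε) :
    AntitoneOn (fun t => log (u t) - (v 0 - μ) / ε * t) (Ici 0) := by
  refine antitoneOn_Ici_of_hasDerivAt (f' := fun t => ε⁻¹ * (v t - v 0)) (fun t ht => ?_)
    (fun t ht => mul_nonpos_of_nonneg_of_nonpos (inv_nonneg.2 hε)
      (sub_nonpos.2 (h.v_le_v_zero ht.le)))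
  have hu : u t ≠ 0 := (h.u_pos t ht).ne'
  have hderiv : HasDerivAt (fun t => log (u t) - (v 0 - μ) / ε * t)
      (ε⁻¹ * u t * (v t - μ) / u t - (v 0 - μ) / ε * 1) t :=
    ((h.u_eq t ht).log hu).sub ((hasDerivAt_id t).const_mul ((v 0 - μ) / ε))
  convert hderiv using 1
  field_simp
  ring

theorem u_le_mul_exp (h : IsODESol μ ε u v) (hε : 0 ≤ ε) {t : ℝ} (ht : 0 ≤ t) :
    u t ≤ u 0 * exp ((v 0 - μ) * t / ε) := by
  have hlog := h.antitoneOn_log_u_sub hε self_mem_Ici ht ht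
  simp only [mul_zero, sub_zero] at hlog
  rw [← exp_log (h.u_pos t ht), ← exp_log (h.u_pos 0 le_rfl), ← exp_add]
  gcongr
  linarith [show (v 0 - μ) * t / ε = (v 0 - μ) / ε * t by ring]

theorem antitoneOn_u (h : IsODESol μ ε u v) (hε : 0 ≤ ε) (hv : v 0 ≤ μ) :
    AntitoneOn u (Ici 0) :=
  antitoneOn_Ici_of_hasDerivAt h.u_eq fun t ht =>
    mul_nonpos_of_nonneg_of_nonpos (mul_nonneg (inv_nonneg.2 hε) (h.u_pos t ht.le).le)
      (by linarith [h.v_le_v_zero ht.le])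

theorem abs_v_sub_v_zero_le (h : IsODESol μ ε u v) (hε : 0 ≤ ε) (hv : v 0 ≤ μ) {t : ℝ}
    (ht : 0 ≤ t) : |v t - v 0| ≤ u 0 * v 0 * t := by
  have hderiv_le : ∀ s ∈ Ici (0 : ℝ), ‖-(u s * v s)‖ ≤ u 0 * v 0 := fun s hs => by
    rw [norm_neg, norm_of_nonneg (mul_pos (h.u_pos s hs) (h.v_pos s hs)).le]
    exact mul_le_mul (h.antitoneOn_u hε hv self_mem_Ici hs hs) (h.v_le_v_zero hs)
      (h.v_pos s hs).le (h.u_pos 0 le_rfl).le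
  simpa [abs_of_nonneg ht] using
    (convex_Ici 0).norm_image_sub_le_of_norm_hasDerivWithin_le
      (fun s hs => (h.v_eq s hs).hasDerivWithinAt) hderiv_le self_mem_Ici (mem_Ici.2 ht)

end IsODESol

theorem below_threshold_limit_general (μ : ℝ)
    (u v : ℝ → ℝ → ℝ) (φ0 v0 : ℝ → ℝ) (φlim vlim : ℝ)
    (hsol : ∀ ε ∈ Set.Ioc (0:ℝ) 1, IsODESol μ ε (u ε) (v ε))
    (hu0 : ∀ ε ∈ Set.Ioc (0:ℝ) 1, u ε 0 = Real.exp (φ0 ε / ε))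
    (hv0 : ∀ ε ∈ Set.Ioc (0:ℝ) 1, v ε 0 = v0 ε)
    (hv0μ : ∀ ε ∈ Set.Ioc (0:ℝ) 1, v0 ε < μ)
    (hφconv : Tendsto φ0 (nhdsWithin 0 (Set.Ioc 0 1)) (𝓝 φlim))
    (hφneg : φlim < 0)
    (hvconv : Tendsto v0 (nhdsWithin 0 (Set.Ioc 0 1)) (𝓝 vlim)) :
    (∀ ε ∈ Set.Ioc (0:ℝ) 1, ∀ t, 0 ≤ t →
        u ε t ≤ Real.exp ((φ0 ε + (v0 ε - μ) * t) / ε)) ∧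
    (∀ t, 0 < t →
        Tendsto (fun ε => u ε t) (nhdsWithin 0 (Set.Ioc 0 1)) (𝓝 0)) ∧
    (∀ t, 0 ≤ t →
        Tendsto (fun ε => v ε t) (nhdsWithin 0 (Set.Ioc 0 1)) (𝓝 vlim)) := by
  have hsmall : ∀ᶠ ε in 𝓝[Ioc 0 1] (0 : ℝ), ε ∈ Ioc (0 : ℝ) 1 := self_mem_nhdsWithin
  have hinv : Tendsto (fun ε : ℝ => ε⁻¹) (𝓝[Ioc 0 1] 0) atTop :=
    tendsto_inv_nhdsGT_zero.mono_left (nhdsWithin_mono 0 Ioc_subset_Ioi_self)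
  have hu0_lim : Tendsto (fun ε => exp (φ0 ε / ε)) (𝓝[Ioc 0 1] 0) (𝓝 0) :=
    tendsto_exp_atBot.comp (by simpa only [div_eq_mul_inv] using hφconv.neg_mul_atTop hφneg hinv)
  have hv0_le : ∀ ε ∈ Ioc (0 : ℝ) 1, v ε 0 ≤ μ := fun ε hε => (hv0 ε hε).trans_le (hv0μ ε hε).le
  refine ⟨fun ε hε t ht => ?_, fun t ht => ?_, fun t ht => ?_⟩
  · calc u ε t ≤ u ε 0 * exp ((v ε 0 - μ) * t / ε) := (hsol ε hε).u_le_mul_exp hε.1.le ht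
      _ = exp ((φ0 ε + (v0 ε - μ) * t) / ε) := by rw [hu0 ε hε, hv0 ε hε, ← exp_add, add_div]
  · refine squeeze_zero' ?_ ?_ hu0_lim <;> filter_upwards [hsmall] with ε hε
    · exact ((hsol ε hε).u_pos t ht.le).le
    · rw [← hu0 ε hε]
      exact (hsol ε hε).antitoneOn_u hε.1.le (hv0_le ε hε) self_mem_Ici ht.le ht.le
  · have hdrift : Tendsto (fun ε => v ε t - v0 ε) (𝓝[Ioc 0 1] 0) (𝓝 0) := by
      refine squeeze_zero_norm' ?_ (by simpa using (hu0_lim.mul hvconv).mul_const t)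
      filter_upwards [hsmall] with ε hε
      rw [norm_eq_abs, ← hu0 ε hε, ← hv0 ε hε]
      exact (hsol ε hε).abs_v_sub_v_zero_le hε.1.le (hv0_le ε hε) ht
    simpa using hvconv.add hdrift

/-- The case `v⁰ < μ` of Theorem 2.1: (a) `u_ε(t) ≤ exp((φ⁰_ε + (v⁰_ε - μ)t)/ε)`,
(b) `u_ε(t) → 0` for `t > 0`, and (c) `v_ε(t) → v⁰` for every `t ≥ 0`, as `ε → 0`. -/
theorem below_threshold_limit (μ : ℝ) (hμ : 0 < μ)
    (u v : ℝ → ℝ → ℝ) (φ0 v0 : ℝ → ℝ) (φlim vlim : ℝ)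
    (hsol : ∀ ε ∈ Set.Ioc (0:ℝ) 1, IsODESol μ ε (u ε) (v ε))
    (hu0 : ∀ ε ∈ Set.Ioc (0:ℝ) 1, u ε 0 = Real.exp (φ0 ε / ε))
    (hv0 : ∀ ε ∈ Set.Ioc (0:ℝ) 1, v ε 0 = v0 ε)
    (hv0μ : ∀ ε ∈ Set.Ioc (0:ℝ) 1, v0 ε < μ)
    (hφconv : Tendsto φ0 (nhdsWithin 0 (Set.Ioc 0 1)) (𝓝 φlim))
    (hφneg : φlim < 0)
    (hvconv : Tendsto v0 (nhdsWithin 0 (Set.Ioc 0 1)) (𝓝 vlim))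
    (hvlim : vlim < μ) :
    (∀ ε ∈ Set.Ioc (0:ℝ) 1, ∀ t, 0 ≤ t →
        u ε t ≤ Real.exp ((φ0 ε + (v0 ε - μ) * t) / ε)) ∧
    (∀ t, 0 < t →
        Tendsto (fun ε => u ε t) (nhdsWithin 0 (Set.Ioc 0 1)) (𝓝 0)) ∧
    (∀ t, 0 ≤ t →
        Tendsto (fun ε => v ε t) (nhdsWithin 0 (Set.Ioc 0 1)) (𝓝 vlim)) :=
  below_threshold_limit_general μ u v φ0 v0 φlim vlim hsol hu0 hv0 hv0μ hφconv hφneg hvconv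
end

section
/- Suppose (u,v) solves the PDE system, with u, v, ln v of class C¹ in t and C² in x, mixed partial derivatives continuous and equal, and ∂²_xx u, ∂²_xx ln v of class C¹ in t. Then for all t ≥ 0 and x ∈ ℝ: ε ∂_t w(t,x) − ε² ∂²_xx w(t,x) − Q̃(w(t,x)) = − Q̃(w⁰(x)) − ε u⁰(x) − ε² ∂²_xx w⁰(x). Equivalently, the quantity ε u + v − μ ln v + ε² ∂²_xx ln v is independent of time. -/
open Real Filter Topology MeasureTheory

/-- `(u, v)` solves the PDE system `∂ₜu = ε ∂ₓₓu + ε⁻¹ u (v - μ)`, `∂ₜv = -u v`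
on `[0, ∞) × ℝ`, with `u, v` smooth and positive. -/
structure IsPDESol (μ ε : ℝ) (u v : ℝ → ℝ → ℝ) : Prop where
  u_pos : ∀ t x, 0 ≤ t → 0 < u t x
  v_pos : ∀ t x, 0 ≤ t → 0 < v t x
  u_smooth : ContDiff ℝ (⊤ : ℕ∞) (fun p : ℝ × ℝ => u p.1 p.2)
  v_smooth : ContDiff ℝ (⊤ : ℕ∞) (fun p : ℝ × ℝ => v p.1 p.2)
  u_eq : ∀ t x, 0 ≤ t →
    HasDerivAt (fun s => u s x)
      (ε * deriv (deriv (fun z => u t z)) x + ε⁻¹ * u t x * (v t x - μ)) t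
  v_eq : ∀ t x, 0 ≤ t → HasDerivAt (fun s => v s x) (-(u t x * v t x)) t

/-- `Q̃(W) = e^W - μ W`, so that `Q̃(ln v) = Q(v) = v - μ ln v`. -/
noncomputable def Qt (μ W : ℝ) : ℝ := Real.exp W - μ * W

/-- The fundamental identity (14):
`ε ∂ₜw - ε² ∂ₓₓw - Q̃(w) = -Q̃(w⁰) - ε u⁰ - ε² ∂ₓₓw⁰` where `w = ln v`; equivalently,
`ε u + v - μ ln v + ε² ∂ₓₓ ln v` is independent of time. -/
theorem fundamental_identity (μ ε : ℝ) (hμ : 0 < μ) (hε : 0 < ε)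
    (u v : ℝ → ℝ → ℝ) (hsol : IsPDESol μ ε u v)
    -- mixed partial derivatives of `w = ln v` commute:
    (hcomm : ∀ t x, 0 ≤ t →
      HasDerivAt (fun s => deriv (deriv (fun z => Real.log (v s z))) x)
        (deriv (deriv (fun z => deriv (fun s => Real.log (v s z)) t)) x) t) :
    (∀ t x, 0 ≤ t →
      ε * deriv (fun s => Real.log (v s x)) t
          - ε ^ 2 * deriv (deriv (fun z => Real.log (v t z))) x
          - Qt μ (Real.log (v t x))
        = - Qt μ (Real.log (v 0 x)) - ε * u 0 x
          - ε ^ 2 * deriv (deriv (fun z => Real.log (v 0 z))) x) ∧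
    (∀ t x, 0 ≤ t →
      ε * u t x + v t x - μ * Real.log (v t x)
          + ε ^ 2 * deriv (deriv (fun z => Real.log (v t z))) x
        = ε * u 0 x + v 0 x - μ * Real.log (v 0 x)
          + ε ^ 2 * deriv (deriv (fun z => Real.log (v 0 z))) x) := by
  obtain ⟨hupos, hvpos, husm, hvsm, hueq, hveq⟩ := hsol
  -- time derivative of w = log v is -u
  have hw_t : ∀ t x, 0 ≤ t → HasDerivAt (fun s => Real.log (v s x)) (-(u t x)) t := by
    intro t x ht
    have h := (hveq t x ht).log (ne_of_gt (hvpos t x ht))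
    rw [neg_div, mul_div_assoc, div_self (ne_of_gt (hvpos t x ht)), mul_one] at h
    exact h
  have hw_t' : ∀ t x, 0 ≤ t → deriv (fun s => Real.log (v s x)) t = -(u t x) :=
    fun t x ht => (hw_t t x ht).deriv
  -- time derivative of ∂ₓₓ log v is -∂ₓₓ u
  have hWxx_t : ∀ t x, 0 ≤ t →
      HasDerivAt (fun s => deriv (deriv (fun z => Real.log (v s z))) x)
        (-(deriv (deriv (fun z => u t z)) x)) t := by
    intro t x ht
    have h := hcomm t x ht
    have heq : (fun z => deriv (fun s => Real.log (v s z)) t) = fun z => -(u t z) := by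
      funext z; exact hw_t' t z ht
    rw [heq] at h
    have heq2 : deriv (fun z => -(u t z)) = fun z => -(deriv (fun z => u t z) z) := by
      funext z
      exact deriv.neg
    rw [heq2] at h
    have heq3 : deriv (fun z => -(deriv (fun z => u t z) z)) x
        = -(deriv (deriv (fun z => u t z)) x) := deriv.neg
    rw [heq3] at h
    exact h
  -- F(s) = ε u + v - μ log v + ε² ∂ₓₓ log v has zero time derivative
  have hF : ∀ x t, 0 ≤ t →
      HasDerivAt (fun s => ε * u s x + v s x - μ * Real.log (v s x)
        + ε ^ 2 * deriv (deriv (fun z => Real.log (v s z))) x) 0 t := by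
    intro x t ht
    have h1 := (hueq t x ht).const_mul ε
    have h2 := hveq t x ht
    have h3 := (hw_t t x ht).const_mul μ
    have h4 := (hWxx_t t x ht).const_mul (ε ^ 2)
    have h := ((h1.add h2).sub h3).add h4
    exact h.congr_deriv (by linear_combination (u t x * (v t x - μ)) * (mul_inv_cancel₀ (ne_of_gt hε)))
  -- constancy of F
  have hconst : ∀ x t, 0 ≤ t →
      ε * u t x + v t x - μ * Real.log (v t x)
        + ε ^ 2 * deriv (deriv (fun z => Real.log (v t z))) x
      = ε * u 0 x + v 0 x - μ * Real.log (v 0 x)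
        + ε ^ 2 * deriv (deriv (fun z => Real.log (v 0 z))) x := by
    intro x t ht
    have key := constant_of_has_deriv_right_zero (f := fun s => ε * u s x + v s x
        - μ * Real.log (v s x) + ε ^ 2 * deriv (deriv (fun z => Real.log (v s z))) x)
      (a := 0) (b := t)
      (fun s hs => ((hF x s hs.1).continuousAt).continuousWithinAt)
      (fun s hs => (hF x s hs.1).hasDerivWithinAt)
    exact key t (Set.right_mem_Icc.2 ht)
  refine ⟨?_, fun t x ht => hconst x t ht⟩
  · intro t x ht
    have h := hconst x t ht
    rw [hw_t' t x ht]
    simp only [Qt, Real.exp_log (hvpos t x ht), Real.exp_log (hvpos 0 x le_rfl)]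
    linarith
end

section
/- Let C₀ > 0. Suppose ε ∈ (0,1] and (u,v) solves the PDE system with |w(t,x)| ≤ C₀ for all t, x, and there is a twice differentiable w⁰_− : ℝ → ℝ with Q̃(w⁰_−) = Q̃(w⁰), w⁰_− ≤ ln μ, |w⁰_−| ≤ C₀, satisfying the pointwise bound ε ∂²_xx (w⁰ − w⁰_−)(x) + u⁰(x) ≤ C₀ for all x. Assume further that for each T > 0 the infimum of (w − w⁰_−) over [0,T] × ℝ is attained at some point. Then there is a constant C depending only on C₀ and μ (not on ε) such that w(t,x) ≥ w⁰_−(x) − C √ε for all t ≥ 0 and x ∈ ℝ. -/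
open Real Filter Topology MeasureTheory

noncomputable def pdX (G : ℝ × ℝ → ℝ) (p : ℝ × ℝ) : ℝ := fderiv ℝ G p (0, 1)
noncomputable def pdT (G : ℝ × ℝ → ℝ) (p : ℝ × ℝ) : ℝ := fderiv ℝ G p (1, 0)

lemma sliceX_hasDerivAt {G : ℝ × ℝ → ℝ} {t x : ℝ} (h : DifferentiableAt ℝ G (t, x)) :
    HasDerivAt (fun z => G (t, z)) (pdX G (t, x)) x := by
  have h1 : HasDerivAt (fun z : ℝ => ((t, z) : ℝ × ℝ)) ((0 : ℝ), (1 : ℝ)) x :=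
    (hasDerivAt_const _ _).prodMk (hasDerivAt_id _)
  exact h.hasFDerivAt.comp_hasDerivAt x h1

lemma sliceT_hasDerivAt {G : ℝ × ℝ → ℝ} {t x : ℝ} (h : DifferentiableAt ℝ G (t, x)) :
    HasDerivAt (fun s => G (s, x)) (pdT G (t, x)) t := by
  have h1 : HasDerivAt (fun s : ℝ => ((s, x) : ℝ × ℝ)) ((1 : ℝ), (0 : ℝ)) t :=
    (hasDerivAt_id _).prodMk (hasDerivAt_const _ _)
  exact h.hasFDerivAt.comp_hasDerivAt t h1

section onOpen

variable {S : Set (ℝ × ℝ)} {G : ℝ × ℝ → ℝ} (hS : IsOpen S) (hG : ContDiffOn ℝ (⊤ : ℕ∞) G S)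

include hS hG

lemma pdX_contDiffOn : ContDiffOn ℝ (⊤ : ℕ∞) (pdX G) S :=
  (hG.fderiv_of_isOpen hS (by simp)).clm_apply contDiffOn_const

lemma diffAt_of_mem {p : ℝ × ℝ} (hp : p ∈ S) : DifferentiableAt ℝ G p :=
  (hG.contDiffAt (hS.mem_nhds hp)).differentiableAt (by simp)

/-- Schwarz symmetry: `∂ₜ∂ₓ G = ∂ₓ∂ₜ G` on the open set `S`. -/
lemma pd_symm {p : ℝ × ℝ} (hp : p ∈ S) : pdT (pdX G) p = pdX (pdT G) p := by
  have hat : ContDiffAt ℝ (⊤ : ℕ∞) G p := hG.contDiffAt (hS.mem_nhds hp)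
  have h1 : ContDiffAt ℝ 1 (fderiv ℝ G) p := hat.fderiv_right (WithTop.coe_le_coe.2 le_top)
  have hd : DifferentiableAt ℝ (fderiv ℝ G) p := h1.differentiableAt one_ne_zero
  have hdf : HasFDerivAt (fderiv ℝ G) (fderiv ℝ (fderiv ℝ G) p) p := hd.hasFDerivAt
  have hev : ∀ᶠ q in 𝓝 p, HasFDerivAt G (fderiv ℝ G q) q := by
    filter_upwards [hS.mem_nhds hp] with q hq
    exact (diffAt_of_mem hS hG hq).hasFDerivAt
  have hsymm := second_derivative_symmetric_of_eventually hev hdf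
  have hx : HasFDerivAt (pdX G)
      ((ContinuousLinearMap.apply ℝ ℝ ((0 : ℝ), (1 : ℝ))).comp (fderiv ℝ (fderiv ℝ G) p)) p :=
    (ContinuousLinearMap.apply ℝ ℝ ((0 : ℝ), (1 : ℝ))).hasFDerivAt.comp p hdf
  have ht : HasFDerivAt (pdT G)
      ((ContinuousLinearMap.apply ℝ ℝ ((1 : ℝ), (0 : ℝ))).comp (fderiv ℝ (fderiv ℝ G) p)) p :=
    (ContinuousLinearMap.apply ℝ ℝ ((1 : ℝ), (0 : ℝ))).hasFDerivAt.comp p hdf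
  have e1 : pdT (pdX G) p = fderiv ℝ (fderiv ℝ G) p (1, 0) (0, 1) := by
    simp [pdT, hx.fderiv]
  have e2 : pdX (pdT G) p = fderiv ℝ (fderiv ℝ G) p (0, 1) (1, 0) := by
    simp [pdX, ht.fderiv]
  rw [e1, e2, hsymm]

lemma deriv_slice_eq {t x : ℝ} (hp : (t, x) ∈ S) :
    deriv (fun z => G (t, z)) x = pdX G (t, x) :=
  (sliceX_hasDerivAt (diffAt_of_mem hS hG hp)).deriv

lemma deriv_deriv_slice_eq {t x : ℝ} (hp : (t, x) ∈ S) :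
    deriv (deriv (fun z => G (t, z))) x = pdX (pdX G) (t, x) := by
  have hSx : IsOpen {z : ℝ | (t, z) ∈ S} := hS.preimage (by fun_prop)
  have hev : deriv (fun z => G (t, z)) =ᶠ[𝓝 x] fun z => pdX G (t, z) := by
    filter_upwards [hSx.mem_nhds hp] with z hz
    exact deriv_slice_eq hS hG hz
  rw [hev.deriv_eq]
  exact (sliceX_hasDerivAt (diffAt_of_mem hS (pdX_contDiffOn hS hG) hp)).deriv

end onOpen

/-- Second derivative test at a global minimum. -/
lemma second_deriv_nonneg_of_min {g : ℝ → ℝ} {x₀ : ℝ}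
    (hg : ∀ z, DifferentiableAt ℝ g z)
    (hg' : DifferentiableAt ℝ (deriv g) x₀)
    (hmin : ∀ z, g x₀ ≤ g z) : 0 ≤ deriv (deriv g) x₀ := by
  by_contra hcon
  push_neg at hcon
  have h0 : deriv g x₀ = 0 := by
    have : IsLocalMin g x₀ := Filter.Eventually.of_forall hmin
    exact this.deriv_eq_zero
  have hD : HasDerivAt (deriv g) (deriv (deriv g) x₀) x₀ := hg'.hasDerivAt
  have hslope : Tendsto (slope (deriv g) x₀) (𝓝[>] x₀) (𝓝 (deriv (deriv g) x₀)) :=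
    (hasDerivAt_iff_tendsto_slope.1 hD).mono_left
      (nhdsWithin_mono _ (by intro z hz; exact ne_of_gt hz))
  have hneg : ∀ᶠ z in 𝓝[>] x₀, slope (deriv g) x₀ z < 0 :=
    hslope.eventually (eventually_lt_nhds hcon)
  have hneg' : ∀ᶠ z in 𝓝[>] x₀, deriv g z < 0 := by
    filter_upwards [hneg, self_mem_nhdsWithin] with z hz hz'
    have hzx : (0:ℝ) < z - x₀ := sub_pos.2 hz'
    have heq : slope (deriv g) x₀ z = deriv g z / (z - x₀) := by
      rw [slope_def_field, h0]; ring
    rw [heq] at hz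
    by_contra hge
    push_neg at hge
    exact absurd hz (not_lt.2 (div_nonneg hge hzx.le))
  obtain ⟨b, hb, hsub⟩ := mem_nhdsGT_iff_exists_Ioc_subset.1 hneg'
  have hcont : ContinuousOn g (Set.Icc x₀ b) := fun z _ => ((hg z).continuousAt).continuousWithinAt
  obtain ⟨c, hc, hceq⟩ := exists_hasDerivAt_eq_slope g (deriv g) hb hcont
    (fun z _ => (hg z).hasDerivAt)
  have h1 : deriv g c < 0 := hsub ⟨hc.1, hc.2.le⟩
  have h2 : 0 ≤ (g b - g x₀) / (b - x₀) :=
    div_nonneg (sub_nonneg.2 (hmin b)) (sub_nonneg.2 hb.le)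
  rw [hceq] at h1
  exact absurd h2 (not_le.2 h1)

lemma Qt_hasDerivAt (μ s : ℝ) : HasDerivAt (Qt μ) (Real.exp s - μ) s := by
  have h : HasDerivAt (fun W => Real.exp W - μ * W) (Real.exp s - μ * 1) s :=
    (Real.hasDerivAt_exp s).sub ((hasDerivAt_id s).const_mul μ)
  simp only [mul_one] at h
  exact h

lemma Qt_strictAntiOn {μ : ℝ} (hμ : 0 < μ) : StrictAntiOn (Qt μ) (Set.Iic (Real.log μ)) := by
  apply strictAntiOn_of_deriv_neg (convex_Iic _)
  · exact (Real.continuous_exp.sub (continuous_const.mul continuous_id)).continuousOn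
  · intro x hx
    rw [interior_Iic] at hx
    rw [(Qt_hasDerivAt μ x).deriv]
    have : Real.exp x < Real.exp (Real.log μ) := Real.exp_lt_exp.2 hx
    rw [Real.exp_log hμ] at this
    linarith

/-- Strong convexity of `Qt` on the left branch. -/
lemma Qt_strong_convex {μ C₀ a b : ℝ} (hμ : 0 < μ) (ha : -C₀ ≤ a) (hab : a ≤ b)
    (hb : b ≤ Real.log μ) :
    Real.exp (-C₀) / 2 * (b - a) ^ 2 ≤ Qt μ a - Qt μ b := by
  set c := Real.exp (-C₀) with hc
  have hcpos : 0 < c := Real.exp_pos _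
  set g := fun s => Qt μ s - c / 2 * (s - b) ^ 2 with hgdef
  have hg' : ∀ s, HasDerivAt g (Real.exp s - μ - c * (s - b)) s := by
    intro s
    have h1 : HasDerivAt (fun s : ℝ => (s - b) ^ 2) (2 * (s - b) ^ 1 * 1) s :=
      ((hasDerivAt_id s).sub_const b).pow 2
    have : HasDerivAt g (Real.exp s - μ - c / 2 * (2 * (s - b) ^ 1 * 1)) s :=
      (Qt_hasDerivAt μ s).fun_sub (h1.const_mul (c / 2))
    convert this using 1
    ring
  have hanti : AntitoneOn g (Set.Icc a b) := by
    apply antitoneOn_of_deriv_nonpos (convex_Icc a b)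
    · exact fun s _ => ((hg' s).continuousAt).continuousWithinAt
    · intro s _
      exact ((hg' s).differentiableAt).differentiableWithinAt
    · intro s hs
      rw [interior_Icc] at hs
      rw [(hg' s).deriv]
      have hsa : a < s := hs.1
      have hsb : s < b := hs.2
      have h1 : c ≤ Real.exp s := by
        rw [hc]
        exact Real.exp_le_exp.2 (by linarith)
      have h2 : Real.exp s * (b - s) ≤ Real.exp b - Real.exp s := by
        have h0 := Real.add_one_le_exp (b - s)
        have h3 : Real.exp s * (b - s + 1) ≤ Real.exp s * Real.exp (b - s) :=
          mul_le_mul_of_nonneg_left h0 (Real.exp_pos s).le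
        rw [← Real.exp_add] at h3
        have h4 : s + (b - s) = b := by ring
        rw [h4] at h3
        nlinarith [Real.exp_pos s]
      have h4 : Real.exp b ≤ μ := by
        calc Real.exp b ≤ Real.exp (Real.log μ) := Real.exp_le_exp.2 hb
        _ = μ := Real.exp_log hμ
      have h5 : c * (b - s) ≤ Real.exp s * (b - s) :=
        mul_le_mul_of_nonneg_right h1 (by linarith)
      nlinarith
  have := hanti (Set.left_mem_Icc.2 hab) (Set.right_mem_Icc.2 hab) hab
  simp only [hgdef] at this
  nlinarith [this]

set_option maxHeartbeats 1600000 in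
/-- Third statement of Lemma 3.1: under the additional assumption (13),
`w(t,x) ≥ w⁰₋(x) - C √ε` with `C` depending only on `C₀` and `μ`. -/
theorem sqrt_eps_lower_bound (μ C₀ : ℝ) (hμ : 0 < μ) (hC₀ : 0 < C₀) :
    ∃ C : ℝ, ∀ ε ∈ Set.Ioc (0:ℝ) 1, ∀ (u v : ℝ → ℝ → ℝ) (w0m : ℝ → ℝ),
      IsPDESol μ ε u v →
      (∀ t x, 0 ≤ t → |Real.log (v t x)| ≤ C₀) →
      Differentiable ℝ w0m →
      Differentiable ℝ (deriv w0m) →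
      (∀ x, Qt μ (w0m x) = Qt μ (Real.log (v 0 x))) →
      (∀ x, w0m x ≤ Real.log μ) →
      (∀ x, |w0m x| ≤ C₀) →
      -- assumption (13): ε ∂ₓₓ(w⁰ - w⁰₋) + u⁰ ≤ C₀
      (∀ x, ε * deriv (deriv (fun z => Real.log (v 0 z) - w0m z)) x + u 0 x ≤ C₀) →
      -- the infimum of `w - w⁰₋` over `[0,T] × ℝ` is attained:
      (∀ T, 0 < T → ∃ p : ℝ × ℝ, p.1 ∈ Set.Icc (0:ℝ) T ∧
        ∀ t x, t ∈ Set.Icc (0:ℝ) T →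
          Real.log (v p.1 p.2) - w0m p.2 ≤ Real.log (v t x) - w0m x) →
      ∀ t x : ℝ, 0 ≤ t → w0m x - C * Real.sqrt ε ≤ Real.log (v t x) := by
  refine ⟨Real.sqrt (2 * Real.exp C₀ * C₀), ?_⟩
  intro ε hε u v w0m hsol hbound hw0m1 hw0m2 hQ hle hbnd h13 hmin t x ht
  have hε0 : 0 < ε := hε.1
  have hCpos : 0 ≤ Real.sqrt (2 * Real.exp C₀ * C₀) * Real.sqrt ε :=
    mul_nonneg (Real.sqrt_nonneg _) (Real.sqrt_nonneg _)
  -- the left-branch comparison: `w⁰₋ ≤ w⁰`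
  have hbranch : ∀ y, w0m y ≤ Real.log (v 0 y) := by
    intro y
    by_contra hlt
    push_neg at hlt
    have h1 : Real.log (v 0 y) ∈ Set.Iic (Real.log μ) :=
      Set.mem_Iic.2 (le_of_lt (lt_of_lt_of_le hlt (hle y)))
    have h2 := (Qt_strictAntiOn hμ) h1 (Set.mem_Iic.2 (hle y)) hlt
    rw [hQ y] at h2
    exact lt_irrefl _ h2
  rcases eq_or_lt_of_le ht with h0 | htpos
  · rw [← h0]
    have := hbranch x
    linarith
  -- main case : `t > 0`
  obtain ⟨⟨t₀, x₀⟩, ht₀Icc, hminp⟩ := hmin t htpos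
  simp only at hminp
  have ht₀ : 0 ≤ t₀ := ht₀Icc.1
  -- setup : smoothness of `W = log ∘ v` on the open set `S`
  set S : Set (ℝ × ℝ) := {p | 0 < v p.1 p.2} with hSdef
  have hS : IsOpen S := isOpen_lt continuous_const hsol.v_smooth.continuous
  have hmem : ∀ s y, 0 ≤ s → ((s, y) : ℝ × ℝ) ∈ S := fun s y hs => hsol.v_pos s y hs
  set W : ℝ × ℝ → ℝ := fun p => Real.log (v p.1 p.2) with hWdef
  have hWS : ContDiffOn ℝ (⊤ : ℕ∞) W S := fun p hp =>
    ((hsol.v_smooth.contDiffAt).log (ne_of_gt hp)).contDiffWithinAt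
  have hUS : ContDiffOn ℝ (⊤ : ℕ∞) (fun p : ℝ × ℝ => u p.1 p.2) Set.univ := hsol.u_smooth.contDiffOn
  -- time derivative of `w`
  have hWt : ∀ s y, 0 ≤ s → HasDerivAt (fun σ => Real.log (v σ y)) (-(u s y)) s := by
    intro s y hs
    have hvpos := hsol.v_pos s y hs
    have h1 := (hsol.v_eq s y hs).log (ne_of_gt hvpos)
    convert h1 using 1
    field_simp
  have hpdTW : ∀ s y, 0 ≤ s → pdT W (s, y) = -(u s y) := by
    intro s y hs
    have h1 : HasDerivAt (fun σ => W (σ, y)) (pdT W (s, y)) s :=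
      sliceT_hasDerivAt (diffAt_of_mem hS hWS (hmem s y hs))
    exact h1.unique (hWt s y hs)
  -- derivative translations
  have hdiffW : ∀ s y, 0 ≤ s → DifferentiableAt ℝ (fun z => Real.log (v s z)) y := fun s y hs =>
    (sliceX_hasDerivAt (diffAt_of_mem hS hWS (hmem s y hs))).differentiableAt
  have hderiv1 : ∀ s, 0 ≤ s → deriv (fun z => Real.log (v s z) - w0m z)
      = fun z => pdX W (s, z) - deriv w0m z := by
    intro s hs
    funext z
    rw [deriv_fun_sub (hdiffW s z hs) (hw0m1 z)]
    congr 1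
    exact (sliceX_hasDerivAt (diffAt_of_mem hS hWS (hmem s z hs))).deriv
  have hDD : ∀ s y, 0 ≤ s → deriv (deriv (fun z => Real.log (v s z) - w0m z)) y
      = pdX (pdX W) (s, y) - deriv (deriv w0m) y := by
    intro s y hs
    rw [hderiv1 s hs]
    rw [deriv_fun_sub ((sliceX_hasDerivAt
      (diffAt_of_mem hS (pdX_contDiffOn hS hWS) (hmem s y hs))).differentiableAt) (hw0m2 y)]
    congr 1
    exact (sliceX_hasDerivAt (diffAt_of_mem hS (pdX_contDiffOn hS hWS) (hmem s y hs))).deriv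
  -- the conserved quantity
  set F : ℝ → ℝ := fun s =>
    u s x₀ + ε * pdX (pdX W) (s, x₀) + ε⁻¹ * Qt μ (Real.log (v s x₀)) with hFdef
  have hpdpdW_cd : ContDiffOn ℝ (⊤ : ℕ∞) (pdX (pdX W)) S := pdX_contDiffOn hS (pdX_contDiffOn hS hWS)
  have hFderiv : ∀ s, 0 < s → HasDerivAt F 0 s := by
    intro s hs
    have hsS : ((s, x₀) : ℝ × ℝ) ∈ S := hmem s x₀ hs.le
    have h1 := hsol.u_eq s x₀ hs.le
    have h2 : HasDerivAt (fun σ => pdX (pdX W) (σ, x₀)) (pdT (pdX (pdX W)) (s, x₀)) s :=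
      sliceT_hasDerivAt (diffAt_of_mem hS hpdpdW_cd hsS)
    -- the swap of partial derivatives
    have hsw1 : pdT (pdX (pdX W)) (s, x₀) = pdX (pdT (pdX W)) (s, x₀) :=
      pd_symm hS (pdX_contDiffOn hS hWS) hsS
    have hev1 : (fun q => pdT (pdX W) q) =ᶠ[𝓝 ((s, x₀) : ℝ × ℝ)] fun q => pdX (pdT W) q := by
      filter_upwards [hS.mem_nhds hsS] with q hq
      exact pd_symm hS hWS hq
    have hsw2 : pdX (pdT (pdX W)) (s, x₀) = pdX (pdX (pdT W)) (s, x₀) := by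
      simp only [pdX]
      rw [hev1.fderiv_eq]
    have hO : IsOpen ({q : ℝ × ℝ | 0 < q.1} ∩ S) :=
      (isOpen_lt continuous_const continuous_fst).inter hS
    have hqmem : ((s, x₀) : ℝ × ℝ) ∈ {q : ℝ × ℝ | 0 < q.1} ∩ S := ⟨hs, hsS⟩
    have hev2 : ∀ q ∈ {q : ℝ × ℝ | 0 < q.1} ∩ S, pdT W q = -(u q.1 q.2) := fun q hq =>
      hpdTW q.1 q.2 hq.1.le
    have hev3 : ∀ q ∈ {q : ℝ × ℝ | 0 < q.1} ∩ S,
        pdX (pdT W) q = pdX (fun r : ℝ × ℝ => -(u r.1 r.2)) q := by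
      intro q hq
      have hEq : (fun r => pdT W r) =ᶠ[𝓝 q] fun r : ℝ × ℝ => -(u r.1 r.2) := by
        filter_upwards [hO.mem_nhds hq] with r hr
        exact hev2 r hr
      simp only [pdX]
      rw [hEq.fderiv_eq]
    have hsw3 : pdX (pdX (pdT W)) (s, x₀)
        = pdX (pdX (fun r : ℝ × ℝ => -(u r.1 r.2))) (s, x₀) := by
      have hEq : (fun q => pdX (pdT W) q)
          =ᶠ[𝓝 ((s, x₀) : ℝ × ℝ)] fun q => pdX (fun r : ℝ × ℝ => -(u r.1 r.2)) q := by
        filter_upwards [hO.mem_nhds hqmem] with q hq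
        exact hev3 q hq
      simp only [pdX]
      rw [hEq.fderiv_eq]
    have hUSneg : ContDiffOn ℝ (⊤ : ℕ∞) (fun p : ℝ × ℝ => -(u p.1 p.2)) Set.univ := hUS.neg
    have hsw4 : pdX (pdX (fun r : ℝ × ℝ => -(u r.1 r.2))) (s, x₀)
        = deriv (deriv (fun z => -(u s z))) x₀ :=
      (deriv_deriv_slice_eq isOpen_univ hUSneg (Set.mem_univ _)).symm
    have hsw5 : deriv (deriv (fun z => -(u s z))) x₀ = -(deriv (deriv (fun z => u s z)) x₀) := by
      have hneg : deriv (fun z => -(u s z)) = fun z => -(deriv (fun z' => u s z') z) :=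
        funext fun z => deriv.fun_neg
      rw [hneg, deriv.fun_neg]
    have hswap : pdT (pdX (pdX W)) (s, x₀) = -(deriv (deriv (fun z => u s z)) x₀) := by
      rw [hsw1, hsw2, hsw3, hsw4, hsw5]
    rw [hswap] at h2
    have h3 : HasDerivAt (fun σ => Qt μ (Real.log (v σ x₀)))
        ((Real.exp (Real.log (v s x₀)) - μ) * -(u s x₀)) s :=
      (Qt_hasDerivAt μ (Real.log (v s x₀))).comp (h₂ := Qt μ) s (hWt s x₀ hs.le)
    rw [Real.exp_log (hsol.v_pos s x₀ hs.le)] at h3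
    have hsum := (h1.add (h2.const_mul ε)).add (h3.const_mul ε⁻¹)
    have hzero : ε * deriv (deriv (fun z => u s z)) x₀ + ε⁻¹ * u s x₀ * (v s x₀ - μ)
        + ε * -(deriv (deriv (fun z => u s z)) x₀)
        + ε⁻¹ * ((v s x₀ - μ) * -(u s x₀)) = 0 := by ring
    rw [hzero] at hsum
    exact hsum
  have hFcont : ∀ s, 0 ≤ s → ContinuousAt F s := by
    intro s hs
    have hsS : ((s, x₀) : ℝ × ℝ) ∈ S := hmem s x₀ hs
    have c1 : ContinuousAt (fun σ : ℝ => u σ x₀) s :=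
      (hsol.u_smooth.continuous.comp
        (continuous_id.prodMk continuous_const) : Continuous fun σ : ℝ => u σ x₀).continuousAt
    have cmk : ContinuousAt (fun σ : ℝ => ((σ, x₀) : ℝ × ℝ)) s :=
      (continuous_id.prodMk continuous_const).continuousAt
    have c2 : ContinuousAt (fun σ : ℝ => pdX (pdX W) (σ, x₀)) s := by
      have h := ContinuousAt.comp (x := s) (g := pdX (pdX W))
        ((hpdpdW_cd.contDiffAt (hS.mem_nhds hsS)).continuousAt) cmk
      exact h
    have hinner : ContinuousAt (fun σ : ℝ => Real.log (v σ x₀)) s := by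
      have h := ContinuousAt.comp (x := s) (g := W)
        ((hWS.contDiffAt (hS.mem_nhds hsS)).continuousAt) cmk
      exact h
    have c3 : ContinuousAt (fun σ : ℝ => Qt μ (Real.log (v σ x₀))) s := by
      simp only [Qt]
      exact hinner.rexp.sub (continuousAt_const.mul hinner)
    exact (c1.add (continuousAt_const.mul c2)).add (continuousAt_const.mul c3)
  have hFconst : F t₀ = F 0 := by
    rcases eq_or_lt_of_le ht₀ with h0 | h0
    · rw [← h0]
    · have hIoc : ∀ s ∈ Set.Ioc (0:ℝ) t₀, F t₀ = F s := by
        intro s hs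
        have := constant_of_has_deriv_right_zero (f := F) (a := s) (b := t₀)
          (fun y hy => ((hFcont y (le_trans hs.1.le hy.1)).continuousWithinAt))
          (fun y hy => (hFderiv y (lt_of_lt_of_le hs.1 hy.1)).hasDerivWithinAt)
        exact this t₀ (Set.right_mem_Icc.2 hs.2)
      have h1 : Tendsto F (𝓝[>] (0:ℝ)) (𝓝 (F 0)) := ((hFcont 0 le_rfl).continuousWithinAt).tendsto
      have h2 : Tendsto F (𝓝[>] (0:ℝ)) (𝓝 (F t₀)) := by
        apply Tendsto.congr' _ (tendsto_const_nhds :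
          Tendsto (fun _ : ℝ => F t₀) (𝓝[>] (0:ℝ)) (𝓝 (F t₀)))
        filter_upwards [Ioc_mem_nhdsGT_of_mem (Set.mem_Ico.2 ⟨le_rfl, h0⟩)] with s hs
        exact hIoc s hs
      exact tendsto_nhds_unique h2 h1
  -- second derivative test at the minimum point
  have hg' : DifferentiableAt ℝ (deriv (fun z => Real.log (v t₀ z) - w0m z)) x₀ := by
    rw [hderiv1 t₀ ht₀]
    exact ((sliceX_hasDerivAt (diffAt_of_mem hS (pdX_contDiffOn hS hWS)
      (hmem t₀ x₀ ht₀))).differentiableAt).sub (hw0m2 x₀)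
  have h2nd : 0 ≤ pdX (pdX W) (t₀, x₀) - deriv (deriv w0m) x₀ := by
    rw [← hDD t₀ x₀ ht₀]
    exact second_deriv_nonneg_of_min (fun z => (hdiffW t₀ z ht₀).sub (hw0m1 z)) hg'
      (fun z => hminp t₀ z ht₀Icc)
  -- assumption (13) in terms of partial derivatives
  have h13' : ε * (pdX (pdX W) (0, x₀) - deriv (deriv w0m) x₀) + u 0 x₀ ≤ C₀ := by
    rw [← hDD 0 x₀ le_rfl]
    exact h13 x₀
  -- conclude `Qt μ a - Qt μ b ≤ C₀ * ε` at the minimum point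
  have hQab : Qt μ (Real.log (v t₀ x₀)) - Qt μ (w0m x₀) ≤ C₀ * ε := by
    have hFc : u t₀ x₀ + ε * pdX (pdX W) (t₀, x₀) + ε⁻¹ * Qt μ (Real.log (v t₀ x₀))
        = u 0 x₀ + ε * pdX (pdX W) (0, x₀) + ε⁻¹ * Qt μ (Real.log (v 0 x₀)) := hFconst
    have hb' : ε⁻¹ * Qt μ (w0m x₀) = ε⁻¹ * Qt μ (Real.log (v 0 x₀)) := by rw [hQ x₀]
    have hu1 : 0 < u t₀ x₀ := hsol.u_pos t₀ x₀ ht₀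
    have e1 : ε * (pdX (pdX W) (0, x₀) - deriv (deriv w0m) x₀)
        = ε * pdX (pdX W) (0, x₀) - ε * deriv (deriv w0m) x₀ := by ring
    have e2 : 0 ≤ ε * (pdX (pdX W) (t₀, x₀) - deriv (deriv w0m) x₀) :=
      mul_nonneg hε0.le h2nd
    have e3 : ε * (pdX (pdX W) (t₀, x₀) - deriv (deriv w0m) x₀)
        = ε * pdX (pdX W) (t₀, x₀) - ε * deriv (deriv w0m) x₀ := by ring
    have hkey : ε⁻¹ * Qt μ (Real.log (v t₀ x₀)) - ε⁻¹ * Qt μ (w0m x₀) ≤ C₀ := by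
      rw [hb']
      linarith [hFc]
    have hfin : Qt μ (Real.log (v t₀ x₀)) - Qt μ (w0m x₀)
        = ε * (ε⁻¹ * Qt μ (Real.log (v t₀ x₀)) - ε⁻¹ * Qt μ (w0m x₀)) := by
      field_simp
    rw [hfin]
    calc ε * (ε⁻¹ * Qt μ (Real.log (v t₀ x₀)) - ε⁻¹ * Qt μ (w0m x₀)) ≤ ε * C₀ :=
      mul_le_mul_of_nonneg_left hkey hε0.le
    _ = C₀ * ε := mul_comm _ _
  -- bound the minimum value from below
  have hkey2 : -(Real.sqrt (2 * Real.exp C₀ * C₀) * Real.sqrt ε)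
      ≤ Real.log (v t₀ x₀) - w0m x₀ := by
    rcases le_or_gt (w0m x₀) (Real.log (v t₀ x₀)) with hcase | hcase
    · linarith
    · have ha : -C₀ ≤ Real.log (v t₀ x₀) := (abs_le.1 (hbound t₀ x₀ ht₀)).1
      have hb2 : w0m x₀ ≤ Real.log μ := hle x₀
      have hconv := Qt_strong_convex hμ ha hcase.le hb2
      have h5 : (w0m x₀ - Real.log (v t₀ x₀)) ^ 2 ≤ 2 * Real.exp C₀ * C₀ * ε := by
        have hec : Real.exp (-C₀) * Real.exp C₀ = 1 := by
          rw [← Real.exp_add]; simp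
        nlinarith [hconv, hQab, Real.exp_pos C₀, Real.exp_pos (-C₀)]
      have h6 : w0m x₀ - Real.log (v t₀ x₀)
          ≤ Real.sqrt (2 * Real.exp C₀ * C₀) * Real.sqrt ε := by
        have h7 : w0m x₀ - Real.log (v t₀ x₀)
            = Real.sqrt ((w0m x₀ - Real.log (v t₀ x₀)) ^ 2) := by
          rw [Real.sqrt_sq (by linarith : (0:ℝ) ≤ w0m x₀ - Real.log (v t₀ x₀))]
        rw [h7, ← Real.sqrt_mul (by positivity : (0:ℝ) ≤ 2 * Real.exp C₀ * C₀) ε]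
        exact Real.sqrt_le_sqrt h5
      linarith
  have hfinal := hminp t x ⟨ht, le_rfl⟩
  linarith
end

section
/- Let C₀ > 0, T > 0, R > 0. Suppose ε ∈ (0,1] and (u,v) solves the PDE system with: |w(t,x)| ≤ C₀ and |w⁰(x)| ≤ C₀ everywhere; |∂_x w⁰(x)| ≤ C₀ for all x; |∂_x w(t,x)| ≤ C₀/ε for all t ∈ [0,T], |x| ≤ R; and ∫₀ᵀ ∫_{|x| ≤ R} |Q̃(w⁰(x)) − Q̃(w(t,x))| dx dt ≤ C₀ ε. Define Φ(x,W) = ∫_{ln μ}^{W} |Q̃(w⁰(x)) − Q̃(s)| ds. Then there is a constant C_{T,R} depending only on C₀, μ, T and R (not on ε) such that ∫₀ᵀ ∫_{|x| ≤ R} |∂_x [Φ(x, w(t,x))]| dx dt ≤ C_{T,R}. -/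
open Real Filter Topology MeasureTheory

lemma Qt_cont (μ : ℝ) : Continuous (Qt μ) :=
  Real.continuous_exp.sub (continuous_const.mul continuous_id)

lemma Qt_lip {μ M : ℝ} (hμ : 0 < μ) (hM : 0 ≤ M) {a b : ℝ} (ha : |a| ≤ M) (hb : |b| ≤ M) :
    |Qt μ b - Qt μ a| ≤ (Real.exp M + μ) * |b - a| := by
  have h := Convex.norm_image_sub_le_of_norm_deriv_le (f := Qt μ) (s := Set.Icc (-M) M)
    (C := Real.exp M + μ)
    (fun x _ => (Qt_hasDerivAt μ x).differentiableAt)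
    (fun x hx => by
      rw [(Qt_hasDerivAt μ x).deriv]
      have h1 : Real.exp x ≤ Real.exp M := Real.exp_le_exp.2 hx.2
      have : |Real.exp x - μ| ≤ Real.exp x + μ := by
        rw [abs_sub_comm]
        refine (abs_sub _ _).trans ?_
        simp [abs_of_pos hμ, abs_of_pos (Real.exp_pos x), add_comm]
      calc ‖Real.exp x - μ‖ ≤ Real.exp x + μ := this
        _ ≤ Real.exp M + μ := by linarith)
    (convex_Icc _ _) (abs_le.1 ha) (abs_le.1 hb)
  simpa using h

lemma Qt_bound {μ M : ℝ} (hμ : 0 < μ) {w : ℝ} (hw : |w| ≤ M) :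
    |Qt μ w| ≤ Real.exp M + μ * M := by
  have hM : 0 ≤ M := le_trans (abs_nonneg w) hw
  have h1 : Real.exp w ≤ Real.exp M := Real.exp_le_exp.2 (abs_le.1 hw).2
  have h2 : |μ * w| = μ * |w| := by rw [abs_mul, abs_of_pos hμ]
  calc |Qt μ w| ≤ Real.exp w + |μ * w| := by
        refine (abs_sub _ _).trans ?_
        simp [abs_of_pos (Real.exp_pos w)]
    _ ≤ Real.exp M + μ * M := by
        have := mul_le_mul_of_nonneg_left hw hμ.le
        rw [h2]; linarith

lemma deriv_bound_gen {F : ℝ → ℝ} {x A B : ℝ} (hA : 0 ≤ A)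
    (hx : ∀ᶠ y in 𝓝 x, |F y - F x| ≤ (A + B * |y - x|) * |y - x|) :
    |deriv F x| ≤ A := by
  by_cases hd : DifferentiableAt ℝ F x
  · have h := hd.hasDerivAt
    rw [hasDerivAt_iff_tendsto_slope] at h
    have h2 : Tendsto (fun y => |slope F x y|) (𝓝[≠] x) (𝓝 |deriv F x|) :=
      (continuous_abs.tendsto _).comp h
    have h3 : Tendsto (fun y => A + B * |y - x|) (𝓝[≠] x) (𝓝 A) := by
      have : Tendsto (fun y : ℝ => A + B * |y - x|) (𝓝 x) (𝓝 (A + B * |x - x|)) :=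
        (continuous_const.add (continuous_const.mul ((continuous_id.sub continuous_const).abs))).tendsto x
      simpa using this.mono_left nhdsWithin_le_nhds
    refine le_of_tendsto_of_tendsto h2 h3 ?_
    filter_upwards [hx.filter_mono nhdsWithin_le_nhds, self_mem_nhdsWithin] with y hy hyx
    have hne : y - x ≠ 0 := sub_ne_zero.2 hyx
    have hpos : 0 < |y - x| := abs_pos.2 hne
    rw [slope_def_field]
    rw [div_eq_mul_inv, abs_mul, abs_inv]
    rw [mul_inv_le_iff₀ hpos]
    exact hy
  · simp [deriv_zero_of_not_differentiableAt hd, hA]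

lemma Phi_diff (μ C₀ : ℝ) (hμ : 0 < μ) (hC₀ : 0 < C₀) {a a' b b' : ℝ}
    (ha : |a| ≤ C₀) (ha' : |a'| ≤ C₀) (hb : |b| ≤ C₀) (hb' : |b'| ≤ C₀) :
    |(∫ s in Real.log μ..b, |Qt μ a - Qt μ s|) - (∫ s in Real.log μ..b', |Qt μ a' - Qt μ s|)|
    ≤ (C₀ + |Real.log μ|) * ((Real.exp C₀ + μ) * |a - a'|)
      + (|Qt μ a' - Qt μ b'| + (Real.exp C₀ + μ) * |b - b'|) * |b - b'| := by
  set L := Real.exp C₀ + μ with hL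
  have hint : ∀ (c : ℝ) (p q : ℝ), IntervalIntegrable (fun s => |Qt μ c - Qt μ s|) volume p q :=
    fun c p q => ((continuous_const.sub (Qt_cont μ)).abs).intervalIntegrable p q
  have hLpos : (0:ℝ) ≤ L := by rw [hL]; positivity
  have key : (∫ s in Real.log μ..b, |Qt μ a - Qt μ s|) - (∫ s in Real.log μ..b', |Qt μ a' - Qt μ s|)
      = (∫ s in Real.log μ..b, (|Qt μ a - Qt μ s| - |Qt μ a' - Qt μ s|))
        + ∫ s in b'..b, |Qt μ a' - Qt μ s| := by
    have h2 := intervalIntegral.integral_interval_sub_left (hint a' (Real.log μ) b)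
      (hint a' (Real.log μ) b')
    rw [intervalIntegral.integral_sub (hint a _ _) (hint a' _ _)]
    linarith
  rw [key]
  refine (abs_add_le _ _).trans (add_le_add ?_ ?_)
  · have h1 : ∀ s ∈ Set.uIoc (Real.log μ) b,
        ‖|Qt μ a - Qt μ s| - |Qt μ a' - Qt μ s|‖ ≤ L * |a - a'| := by
      intro s _
      rw [Real.norm_eq_abs]
      refine (abs_abs_sub_abs_le_abs_sub _ _).trans ?_
      have : Qt μ a - Qt μ s - (Qt μ a' - Qt μ s) = Qt μ a - Qt μ a' := by ring
      rw [this]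
      exact Qt_lip hμ hC₀.le ha' ha
    have := intervalIntegral.norm_integral_le_of_norm_le_const h1
    rw [Real.norm_eq_abs] at this
    refine this.trans ?_
    rw [mul_comm]
    refine mul_le_mul_of_nonneg_right ?_ (mul_nonneg hLpos (abs_nonneg _))
    calc |b - Real.log μ| ≤ |b| + |Real.log μ| := abs_sub _ _
      _ ≤ C₀ + |Real.log μ| := by linarith
  · have h2 : ∀ s ∈ Set.uIoc b' b,
        ‖|Qt μ a' - Qt μ s|‖ ≤ |Qt μ a' - Qt μ b'| + L * |b - b'| := by
      intro s hs
      have hs' : s ∈ Set.uIcc b' b := Set.uIoc_subset_uIcc hs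
      rw [Set.mem_uIcc] at hs'
      have hsC : |s| ≤ C₀ := by
        rw [abs_le] at hb hb' ⊢
        rcases hs' with ⟨h1, h2⟩ | ⟨h1, h2⟩ <;> constructor <;> linarith
      have hsb : |s - b'| ≤ |b - b'| := by
        have e1 := le_abs_self (b - b')
        have e2 := neg_abs_le (b - b')
        rcases hs' with ⟨h1, h2⟩ | ⟨h1, h2⟩ <;> (rw [abs_le]; constructor <;> linarith)
      rw [Real.norm_eq_abs, abs_abs]
      have : Qt μ a' - Qt μ s = (Qt μ a' - Qt μ b') + (Qt μ b' - Qt μ s) := by ring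
      rw [this]
      refine (abs_add_le _ _).trans ?_
      have h3 : |Qt μ b' - Qt μ s| ≤ L * |b - b'| := by
        have := Qt_lip (M := C₀) hμ hC₀.le hsC hb'
        refine this.trans ?_
        rw [abs_sub_comm b' s]
        exact mul_le_mul_of_nonneg_left hsb hLpos
      linarith
    have := intervalIntegral.norm_integral_le_of_norm_le_const h2
    rw [Real.norm_eq_abs] at this
    exact this

/-- The BV bound (21) of Lemma 3.3: with `Φ(x,W) = ∫_{ln μ}^W |Q̃(w⁰(x)) - Q̃(s)| ds`,
`∫₀ᵀ ∫_{|x| ≤ R} |∂ₓ[Φ(x, w(t,x))]| dx dt ≤ C_{T,R}` uniformly in `ε`. -/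
theorem BV_bound_Phi (μ C₀ T R : ℝ) (hμ : 0 < μ) (hC₀ : 0 < C₀)
    (hT : 0 < T) (hR : 0 < R) :
    ∃ C : ℝ, ∀ ε ∈ Set.Ioc (0:ℝ) 1, ∀ u v : ℝ → ℝ → ℝ,
      IsPDESol μ ε u v →
      (∀ t x, 0 ≤ t → |Real.log (v t x)| ≤ C₀) →
      (∀ x, |Real.log (v 0 x)| ≤ C₀) →
      (∀ x, |deriv (fun z => Real.log (v 0 z)) x| ≤ C₀) →
      (∀ t x, t ∈ Set.Icc (0:ℝ) T → |x| ≤ R →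
        |deriv (fun z => Real.log (v t z)) x| ≤ C₀ / ε) →
      (∫ t in (0:ℝ)..T, ∫ x in Set.Icc (-R) R,
          |Qt μ (Real.log (v 0 x)) - Qt μ (Real.log (v t x))|) ≤ C₀ * ε →
      (∫ t in (0:ℝ)..T, ∫ x in Set.Icc (-R) R,
          |deriv (fun y => ∫ s in Real.log μ..Real.log (v t y),
              |Qt μ (Real.log (v 0 y)) - Qt μ s|) x|) ≤ C := by
  set L : ℝ := Real.exp C₀ + μ with hLdef
  have hL : 0 < L := by positivity
  set K₁ : ℝ := (C₀ + |Real.log μ|) * L * C₀ with hK₁def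
  have hK₁ : 0 ≤ K₁ := by positivity
  set M' : ℝ := Real.exp C₀ + μ * C₀ with hM'def
  have hM' : 0 < M' := by positivity
  refine ⟨K₁ * (2 * R) * T + C₀ ^ 2, ?_⟩
  rintro ε ⟨hε0, hε1⟩ u v sol hw hw0 hw0' hwx hQint
  have hCε : 0 < C₀ / ε := by positivity
  -- differentiability of x ↦ log (v t x) for t ≥ 0
  have hv_diff : Differentiable ℝ (fun p : ℝ × ℝ => v p.1 p.2) :=
    sol.v_smooth.differentiable (by simp)
  have hh_diff : ∀ t x : ℝ, 0 ≤ t → DifferentiableAt ℝ (fun z => Real.log (v t z)) x := by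
    intro t x ht
    have h1 : DifferentiableAt ℝ (fun z => v t z) x := by
      have := (hv_diff (t, x)).comp x
        ((DifferentiableAt.prodMk (differentiableAt_const t) differentiableAt_id) : DifferentiableAt ℝ (fun z : ℝ => ((t, z) : ℝ × ℝ)) x)
      exact this
    exact (Real.differentiableAt_log (sol.v_pos t x ht).ne').comp x h1
  -- continuity of x ↦ log (v t x) for t ≥ 0
  have hh_cont : ∀ t : ℝ, 0 ≤ t → Continuous (fun z => Real.log (v t z)) := by
    intro t ht
    exact continuous_iff_continuousAt.2 fun x => ((hh_diff t x ht).continuousAt)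
  -- Lipschitz bound for g = log (v 0 ·)
  have hg_lip : ∀ x y : ℝ, |Real.log (v 0 y) - Real.log (v 0 x)| ≤ C₀ * |y - x| := by
    intro x y
    have := Convex.norm_image_sub_le_of_norm_deriv_le (f := fun z => Real.log (v 0 z))
      (s := Set.univ) (C := C₀) (fun z _ => hh_diff 0 z le_rfl)
      (fun z _ => hw0' z) convex_univ (Set.mem_univ x) (Set.mem_univ y)
    simpa using this
  -- Lipschitz bound for h t on Icc (-R) R, t ∈ [0,T]
  have hh_lip : ∀ t ∈ Set.Icc (0:ℝ) T, ∀ x ∈ Set.Icc (-R) R, ∀ y ∈ Set.Icc (-R) R,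
      |Real.log (v t y) - Real.log (v t x)| ≤ (C₀ / ε) * |y - x| := by
    intro t ht x hx y hy
    have := Convex.norm_image_sub_le_of_norm_deriv_le (f := fun z => Real.log (v t z))
      (s := Set.Icc (-R) R) (C := C₀ / ε) (fun z _ => hh_diff t z ht.1)
      (fun z hz => hwx t z ht (abs_le.2 hz)) (convex_Icc _ _) hx hy
    simpa using this
  -- pointwise derivative bound on the open interval
  have hptwise : ∀ t ∈ Set.Icc (0:ℝ) T, ∀ x ∈ Set.Ioo (-R) R,
      |deriv (fun y => ∫ s in Real.log μ..Real.log (v t y),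
          |Qt μ (Real.log (v 0 y)) - Qt μ s|) x|
      ≤ K₁ + (C₀ / ε) * |Qt μ (Real.log (v 0 x)) - Qt μ (Real.log (v t x))| := by
    intro t ht x hx
    set P : ℝ := |Qt μ (Real.log (v 0 x)) - Qt μ (Real.log (v t x))| with hPdef
    have hP : 0 ≤ P := abs_nonneg _
    refine deriv_bound_gen (B := L * (C₀ / ε) ^ 2) (by positivity) ?_
    filter_upwards [isOpen_Ioo.mem_nhds hx] with y hy
    have hy' : y ∈ Set.Icc (-R) R := Set.Ioo_subset_Icc_self hy
    have hx' : x ∈ Set.Icc (-R) R := Set.Ioo_subset_Icc_self hx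
    have hd1 := Phi_diff μ C₀ hμ hC₀ (hw0 y) (hw0 x) (hw t y ht.1) (hw t x ht.1)
    set d : ℝ := |y - x| with hddef
    have hd : 0 ≤ d := abs_nonneg _
    have hgl := hg_lip x y
    have hhl := hh_lip t ht x hx' y hy'
    have t1 : (C₀ + |Real.log μ|) * (L * |Real.log (v 0 y) - Real.log (v 0 x)|)
        ≤ K₁ * d := by
      rw [hK₁def]
      have : (C₀ + |Real.log μ|) * L * C₀ * d = (C₀ + |Real.log μ|) * (L * (C₀ * d)) := by ring
      rw [this]
      exact mul_le_mul_of_nonneg_left (mul_le_mul_of_nonneg_left hgl hL.le) (by positivity)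
    have t2 : (P + L * |Real.log (v t y) - Real.log (v t x)|)
          * |Real.log (v t y) - Real.log (v t x)|
        ≤ (P + L * ((C₀ / ε) * d)) * ((C₀ / ε) * d) := by
      refine mul_le_mul (add_le_add (le_refl P) (mul_le_mul_of_nonneg_left hhl hL.le)) hhl
        (abs_nonneg _) (by positivity)
    have e : (K₁ + (C₀ / ε) * P + L * (C₀ / ε) ^ 2 * d) * d
        = K₁ * d + (P + L * ((C₀ / ε) * d)) * ((C₀ / ε) * d) := by ring
    calc |(∫ s in Real.log μ..Real.log (v t y), |Qt μ (Real.log (v 0 y)) - Qt μ s|)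
          - (∫ s in Real.log μ..Real.log (v t x), |Qt μ (Real.log (v 0 x)) - Qt μ s|)|
        ≤ (C₀ + |Real.log μ|) * (L * |Real.log (v 0 y) - Real.log (v 0 x)|)
          + (P + L * |Real.log (v t y) - Real.log (v t x)|)
            * |Real.log (v t y) - Real.log (v t x)| := hd1
      _ ≤ K₁ * d + (P + L * ((C₀ / ε) * d)) * ((C₀ / ε) * d) := add_le_add t1 t2
      _ = (K₁ + (C₀ / ε) * P + L * (C₀ / ε) ^ 2 * d) * d := e.symm
  -- P is continuous and bounded
  have hg_cont : Continuous (fun x : ℝ => Real.log (v 0 x)) := hh_cont 0 le_rfl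
  have hPcont : ∀ t : ℝ, 0 ≤ t → Continuous
      (fun x => |Qt μ (Real.log (v 0 x)) - Qt μ (Real.log (v t x))|) := by
    intro t ht
    exact (((Qt_cont μ).comp hg_cont).sub ((Qt_cont μ).comp (hh_cont t ht))).abs
  have hPbound : ∀ t x : ℝ, 0 ≤ t →
      |Qt μ (Real.log (v 0 x)) - Qt μ (Real.log (v t x))| ≤ 2 * M' := by
    intro t x ht
    have h1 := Qt_bound (M := C₀) hμ (hw0 x)
    have h2 := Qt_bound (M := C₀) hμ (hw t x ht)
    calc |Qt μ (Real.log (v 0 x)) - Qt μ (Real.log (v t x))|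
        ≤ |Qt μ (Real.log (v 0 x))| + |Qt μ (Real.log (v t x))| := abs_sub _ _
      _ ≤ 2 * M' := by rw [hM'def]; linarith
  set J : ℝ → ℝ := fun t => ∫ x in Set.Icc (-R) R,
      |Qt μ (Real.log (v 0 x)) - Qt μ (Real.log (v t x))| with hJdef
  have hJnonneg : ∀ t, 0 ≤ J t := fun t => setIntegral_nonneg measurableSet_Icc
    (fun x _ => abs_nonneg _)
  -- inner integral bound for each t ∈ [0,T]
  have hinner : ∀ t ∈ Set.Icc (0:ℝ) T,
      (∫ x in Set.Icc (-R) R, |deriv (fun y => ∫ s in Real.log μ..Real.log (v t y),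
          |Qt μ (Real.log (v 0 y)) - Qt μ s|) x|)
      ≤ K₁ * (2 * R) + (C₀ / ε) * J t := by
    intro t ht
    have hbnd_int : IntegrableOn (fun x => K₁ + (C₀ / ε) *
        |Qt μ (Real.log (v 0 x)) - Qt μ (Real.log (v t x))|) (Set.Icc (-R) R) volume :=
      (continuous_const.add (continuous_const.mul (hPcont t ht.1))).integrableOn_Icc
    -- a.e. pointwise bound on Icc
    have hae : ∀ᵐ x ∂(volume.restrict (Set.Icc (-R) R)),
        |deriv (fun y => ∫ s in Real.log μ..Real.log (v t y),
          |Qt μ (Real.log (v 0 y)) - Qt μ s|) x|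
        ≤ K₁ + (C₀ / ε) * |Qt μ (Real.log (v 0 x)) - Qt μ (Real.log (v t x))| := by
      rw [ae_restrict_iff' measurableSet_Icc]
      have h1 : ∀ᵐ x : ℝ, x ≠ -R := by
        rw [ae_iff]
        convert Real.volume_singleton (a := -R) using 2
        ext z; simp
      have h2 : ∀ᵐ x : ℝ, x ≠ R := by
        rw [ae_iff]
        convert Real.volume_singleton (a := R) using 2
        ext z; simp
      filter_upwards [h1, h2] with x hx1 hx2 hxI
      exact hptwise t ht x ⟨lt_of_le_of_ne hxI.1 (Ne.symm hx1), lt_of_le_of_ne hxI.2 hx2⟩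
    have hmeas : AEStronglyMeasurable (fun x => |deriv (fun y =>
        ∫ s in Real.log μ..Real.log (v t y), |Qt μ (Real.log (v 0 y)) - Qt μ s|) x|)
        (volume.restrict (Set.Icc (-R) R)) :=
      ((measurable_deriv _).abs).aestronglyMeasurable
    have hintg : IntegrableOn (fun x => |deriv (fun y =>
        ∫ s in Real.log μ..Real.log (v t y), |Qt μ (Real.log (v 0 y)) - Qt μ s|) x|)
        (Set.Icc (-R) R) volume := by
      refine hbnd_int.mono' hmeas ?_
      filter_upwards [hae] with x hx
      simpa using hx
    have hmono := integral_mono_ae hintg hbnd_int hae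
    refine hmono.trans ?_
    have hsplit : (∫ x in Set.Icc (-R) R, (K₁ + (C₀ / ε) *
        |Qt μ (Real.log (v 0 x)) - Qt μ (Real.log (v t x))|))
        = (∫ _x in Set.Icc (-R) R, K₁) + (C₀ / ε) * J t := by
      rw [integral_add (continuous_const.integrableOn_Icc)
        (((hPcont t ht.1).integrableOn_Icc).const_mul _)]
      congr 1
      exact integral_const_mul _ _
    rw [hsplit]
    have hvol : (∫ _x in Set.Icc (-R) R, K₁) = K₁ * (2 * R) := by
      rw [setIntegral_const, Real.volume_real_Icc_of_le (by linarith), smul_eq_mul,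
        mul_comm]
      ring_nf
    rw [hvol]
  -- continuity of J on [0,T]
  have hJcont : ContinuousOn J (Set.Icc 0 T) := by
    intro t₀ ht₀
    refine continuousWithinAt_of_dominated (bound := fun _ => 2 * M') ?_ ?_ ?_ ?_
    · filter_upwards [self_mem_nhdsWithin] with t ht
      exact ((hPcont t ht.1).aestronglyMeasurable).restrict
    · filter_upwards [self_mem_nhdsWithin] with t ht
      filter_upwards with x
      simpa using hPbound t x ht.1
    · exact continuous_const.integrableOn_Icc
    · filter_upwards with x
      have hca : ContinuousAt (fun t => |Qt μ (Real.log (v 0 x)) - Qt μ (Real.log (v t x))|) t₀ := by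
        have hvx : ContinuousAt (fun t => v t x) t₀ :=
          (sol.v_smooth.continuous.comp (continuous_id.prodMk continuous_const)).continuousAt
        have hlog : ContinuousAt (fun t => Real.log (v t x)) t₀ :=
          hvx.log (sol.v_pos t₀ x ht₀.1).ne'
        exact (continuousAt_const.sub ((Qt_cont μ).continuousAt.comp hlog)).abs
      exact hca.continuousWithinAt
  have hJint : IntervalIntegrable J volume 0 T := by
    have h' : ContinuousOn J (Set.uIcc 0 T) := by
      rw [Set.uIcc_of_le hT.le]; exact hJcont
    exact h'.intervalIntegrable
  -- conclude
  by_cases hI : IntervalIntegrable (fun t => ∫ x in Set.Icc (-R) R,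
      |deriv (fun y => ∫ s in Real.log μ..Real.log (v t y),
        |Qt μ (Real.log (v 0 y)) - Qt μ s|) x|) volume 0 T
  · have hbint : IntervalIntegrable (fun t => K₁ * (2 * R) + (C₀ / ε) * J t) volume 0 T :=
      (intervalIntegrable_const).add (hJint.const_mul _)
    have h1 := intervalIntegral.integral_mono_on hT.le hI hbint hinner
    refine h1.trans ?_
    rw [intervalIntegral.integral_add intervalIntegrable_const (hJint.const_mul _),
      intervalIntegral.integral_const, intervalIntegral.integral_const_mul]
    have h2 : (C₀ / ε) * ∫ t in (0:ℝ)..T, J t ≤ (C₀ / ε) * (C₀ * ε) :=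
      mul_le_mul_of_nonneg_left hQint hCε.le
    have h3 : (C₀ / ε) * (C₀ * ε) = C₀ ^ 2 := by
      field_simp
    rw [smul_eq_mul]
    nlinarith [h2, h3]
  · rw [intervalIntegral.integral_undef hI]
    positivity
end

section
/- Suppose (u,v) solves the PDE system with u, v smooth enough that φ = ε ln u is C¹ in t and C² in x with p = ∂_t φ itself C¹ in t and C² in x. Fix T > 0 and assume p and ∂_x φ are bounded on [0,T] × ℝ. Then for all t ∈ [0,T] and x ∈ ℝ: ∂_t φ(t,x) ≤ sup_{y ∈ ℝ} ∂_t φ(0,y). (Indeed p satisfies ∂_t p = ε ∂²_xx p + 2 ∂_x φ · ∂_x p − u v ≤ ε ∂²_xx p + 2 ∂_x φ · ∂_x p, and the parabolic maximum principle applies.) -/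
open Real Filter Topology MeasureTheory

lemma hasDerivAt_slice1 {f : ℝ × ℝ → ℝ} {a b : ℝ} (hf : DifferentiableAt ℝ f (a, b)) :
    HasDerivAt (fun t => f (t, b)) (fderiv ℝ f (a, b) ((1 : ℝ), (0 : ℝ))) a :=
  hf.hasFDerivAt.comp_hasDerivAt a (HasDerivAt.prodMk (hasDerivAt_id a) (hasDerivAt_const a b))

lemma hasDerivAt_slice2 {f : ℝ × ℝ → ℝ} {a b : ℝ} (hf : DifferentiableAt ℝ f (a, b)) :
    HasDerivAt (fun x => f (a, x)) (fderiv ℝ f (a, b) ((0 : ℝ), (1 : ℝ))) b :=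
  hf.hasFDerivAt.comp_hasDerivAt b (HasDerivAt.prodMk (hasDerivAt_const b a) (hasDerivAt_id b))

lemma contDiffAt_pd {f : ℝ × ℝ → ℝ} {q : ℝ × ℝ} (hf : ContDiffAt ℝ (⊤ : ℕ∞) f q) (w : ℝ × ℝ) :
    ContDiffAt ℝ (⊤ : ℕ∞) (fun z => fderiv ℝ f z w) q :=
  ((ContinuousLinearMap.apply ℝ ℝ w).contDiff.contDiffAt).comp q (hf.fderiv_right (by simp))

lemma contDiff_deriv_top {g : ℝ → ℝ} (hg : ContDiff ℝ (⊤ : ℕ∞) g) : ContDiff ℝ (⊤ : ℕ∞) (deriv g) := by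
  have h : deriv g = fun x => fderiv ℝ g x 1 := funext fun x => (fderiv_apply_one_eq_deriv).symm
  rw [h]
  exact (ContinuousLinearMap.apply ℝ ℝ (1:ℝ)).contDiff.comp (hg.fderiv_right (by simp))


lemma deriv_nonneg_of_left_max {g : ℝ → ℝ} {a c : ℝ} (hg : HasDerivAt g c a)
    (h : ∀ᶠ t in 𝓝[<] a, g t ≤ g a) : 0 ≤ c := by
  have hs : Tendsto (slope g a) (𝓝[<] a) (𝓝 c) :=
    (hasDerivAt_iff_tendsto_slope.1 hg).mono_left
      (nhdsWithin_mono a (fun t ht => ne_of_lt ht))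
  refine ge_of_tendsto hs ?_
  filter_upwards [h, self_mem_nhdsWithin] with t hgt (hta : t < a)
  rw [slope_def_field]
  exact div_nonneg_iff.2 (Or.inr ⟨by linarith, by linarith⟩)

lemma deriv2_nonpos_of_localMax {g : ℝ → ℝ} {a : ℝ}
    (hg : ContDiffAt ℝ (⊤ : ℕ∞) g a) (h : IsLocalMax g a) : deriv (deriv g) a ≤ 0 := by
  by_contra hc
  push_neg at hc
  obtain ⟨s, hs, hgs⟩ : ∃ s ∈ 𝓝 a, ContDiffOn ℝ 2 g s := by
    have := (hg.of_le (WithTop.coe_le_coe.2 (le_top : (2:ℕ∞) ≤ ⊤)))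
    exact this.contDiffOn le_rfl (by simp)
  obtain ⟨so, hsub, hso, haso⟩ := mem_nhds_iff.1 hs
  have hdiff : ∀ x ∈ so, DifferentiableAt ℝ g x := fun x hx =>
    (((hgs.mono hsub) x hx).contDiffAt (hso.mem_nhds hx)).differentiableAt two_ne_zero
  have hd1 : ContDiffAt ℝ (⊤ : ℕ∞) (deriv g) a := by
    have h' : ∀ᶠ x in 𝓝 a, deriv g x = fderiv ℝ g x 1 :=
      Eventually.of_forall (fun x => (fderiv_apply_one_eq_deriv).symm)
    refine ContDiffAt.congr_of_eventuallyEq ?_ h'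
    exact ((ContinuousLinearMap.apply ℝ ℝ (1:ℝ)).contDiff.contDiffAt).comp a
      (hg.fderiv_right (by simp))
  have hd2 : HasDerivAt (deriv g) (deriv (deriv g) a) a :=
    ((hd1.differentiableAt (by simp)).hasDerivAt)
  have hda : deriv g a = 0 := h.deriv_eq_zero
  have hslope : Tendsto (slope (deriv g) a) (𝓝[>] a) (𝓝 (deriv (deriv g) a)) :=
    (hasDerivAt_iff_tendsto_slope.1 hd2).mono_left
      (nhdsWithin_mono a (fun t ht => ne_of_gt ht))
  have hpos : ∀ᶠ t in 𝓝[>] a, 0 < deriv g t := by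
    filter_upwards [hslope.eventually (eventually_gt_nhds hc), self_mem_nhdsWithin]
      with t hslt (hta : a < t)
    rw [slope_def_field, hda, sub_zero] at hslt
    have := mul_pos hslt (sub_pos.2 hta)
    rwa [div_mul_cancel₀ _ (by linarith : t - a ≠ 0)] at this
  have hcomb : ∀ᶠ t in 𝓝[>] a, 0 < deriv g t ∧ t ∈ so ∧ g t ≤ g a := by
    filter_upwards [hpos, eventually_nhdsWithin_of_eventually_nhds (hso.eventually_mem haso),
      eventually_nhdsWithin_of_eventually_nhds h] with t h1 h2 h3
    exact ⟨h1, h2, h3⟩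
  obtain ⟨b, hb, hIoo⟩ := (mem_nhdsGT_iff_exists_Ioo_subset).1 hcomb
  have hab : a < b := hb
  set m := (a + b) / 2 with hm
  have ham : a < m := by simp only [hm]; linarith
  have hmb : m < b := by simp only [hm]; linarith
  have hsubso : Set.Icc a m ⊆ so := by
    intro t ht
    rcases eq_or_lt_of_le ht.1 with rfl | hlt
    · exact haso
    · exact (hIoo ⟨hlt, lt_of_le_of_lt ht.2 hmb⟩).2.1
  have hcont : ContinuousOn g (Set.Icc a m) := fun t ht =>
    ((hdiff t (hsubso ht)).continuousAt).continuousWithinAt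
  have hmono : StrictMonoOn g (Set.Icc a m) := by
    refine strictMonoOn_of_deriv_pos (convex_Icc a m) hcont ?_
    intro t ht
    rw [interior_Icc] at ht
    exact (hIoo ⟨ht.1, lt_trans ht.2 hmb⟩).1
  have h1 : g a < g m := hmono ⟨le_rfl, le_of_lt ham⟩ ⟨le_of_lt ham, le_rfl⟩ ham
  have h2 : g m ≤ g a := (hIoo ⟨ham, hmb⟩).2.2
  linarith

noncomputable def PhiF (ε : ℝ) (u : ℝ → ℝ → ℝ) : ℝ × ℝ → ℝ :=
  fun q => ε * Real.log (u q.1 q.2)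
noncomputable def PF (ε : ℝ) (u : ℝ → ℝ → ℝ) : ℝ × ℝ → ℝ :=
  fun q => fderiv ℝ (PhiF ε u) q (1, 0)
noncomputable def PhixF (ε : ℝ) (u : ℝ → ℝ → ℝ) : ℝ × ℝ → ℝ :=
  fun q => fderiv ℝ (PhiF ε u) q (0, 1)
noncomputable def PsiF (ε : ℝ) (u : ℝ → ℝ → ℝ) : ℝ × ℝ → ℝ :=
  fun q => fderiv ℝ (PhixF ε u) q (0, 1)
noncomputable def PxF (ε : ℝ) (u : ℝ → ℝ → ℝ) : ℝ × ℝ → ℝ :=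
  fun q => fderiv ℝ (PF ε u) q (0, 1)

variable {μ ε : ℝ} {u v : ℝ → ℝ → ℝ}

lemma Phi_smooth (hsol : IsPDESol μ ε u v) {q : ℝ × ℝ} (hq : 0 < u q.1 q.2) :
    ContDiffAt ℝ (⊤ : ℕ∞) (PhiF ε u) q :=
  contDiffAt_const.mul (hsol.u_smooth.contDiffAt.log hq.ne')

lemma u_slice_smooth (hsol : IsPDESol μ ε u v) (t : ℝ) : ContDiff ℝ (⊤ : ℕ∞) (fun z => u t z) :=
  hsol.u_smooth.comp (contDiff_const.prodMk contDiff_id)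

lemma P_smooth (hsol : IsPDESol μ ε u v) {q : ℝ × ℝ} (hq : 0 < u q.1 q.2) :
    ContDiffAt ℝ (⊤ : ℕ∞) (PF ε u) q := contDiffAt_pd (Phi_smooth hsol hq) _

lemma Phix_smooth (hsol : IsPDESol μ ε u v) {q : ℝ × ℝ} (hq : 0 < u q.1 q.2) :
    ContDiffAt ℝ (⊤ : ℕ∞) (PhixF ε u) q := contDiffAt_pd (Phi_smooth hsol hq) _

/-- slice identification for `p`. -/
lemma hasDerivAt_PF (hsol : IsPDESol μ ε u v) {t x : ℝ} (ht : 0 ≤ t) :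
    HasDerivAt (fun s => ε * Real.log (u s x)) (PF ε u (t, x)) t :=
  hasDerivAt_slice1
    ((Phi_smooth hsol (show 0 < u (t,x).1 (t,x).2 from hsol.u_pos t x ht)).differentiableAt (by simp))

lemma hasDerivAt_PhixF (hsol : IsPDESol μ ε u v) {t x : ℝ} (ht : 0 ≤ t) :
    HasDerivAt (fun z => ε * Real.log (u t z)) (PhixF ε u (t, x)) x :=
  hasDerivAt_slice2
    ((Phi_smooth hsol (show 0 < u (t,x).1 (t,x).2 from hsol.u_pos t x ht)).differentiableAt (by simp))

lemma PF_val (hsol : IsPDESol μ ε u v) {t x : ℝ} (ht : 0 ≤ t) :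
    PF ε u (t, x) =
      ε * ((ε * deriv (deriv (fun z => u t z)) x + ε⁻¹ * u t x * (v t x - μ)) / u t x) := by
  have h := (((hsol.u_eq t x ht).log (hsol.u_pos t x ht).ne')).const_mul ε
  exact (hasDerivAt_PF hsol ht).unique h

lemma Phix_val (hsol : IsPDESol μ ε u v) {t x : ℝ} (ht : 0 ≤ t) :
    PhixF ε u (t, x) = ε * (deriv (fun z => u t z) x / u t x) := by
  have h1 : HasDerivAt (fun z => u t z) (deriv (fun z => u t z) x) x :=
    ((u_slice_smooth hsol t).differentiable (by simp) x).hasDerivAt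
  have h := (h1.log (hsol.u_pos t x ht).ne').const_mul ε
  exact (hasDerivAt_PhixF hsol ht).unique h

lemma Psi_val (hsol : IsPDESol μ ε u v) {t x : ℝ} (ht : 0 ≤ t) :
    PsiF ε u (t, x) =
      ε * ((deriv (deriv (fun z => u t z)) x * u t x -
        deriv (fun z => u t z) x * deriv (fun z => u t z) x) / (u t x) ^ 2) := by
  have hus := u_slice_smooth hsol t
  have h1 : HasDerivAt (fun z => u t z) (deriv (fun z => u t z) x) x :=
    (hus.differentiable (by simp) x).hasDerivAt
  have h2 : HasDerivAt (deriv (fun z => u t z)) (deriv (deriv (fun z => u t z)) x) x :=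
    ((contDiff_deriv_top hus).differentiable (by simp) x).hasDerivAt
  have h3 : HasDerivAt (fun z => deriv (fun z' => u t z') z / u t z)
      ((deriv (deriv (fun z => u t z)) x * u t x -
        deriv (fun z => u t z) x * deriv (fun z => u t z) x) / (u t x) ^ 2) x :=
    h2.div h1 (hsol.u_pos t x ht).ne'
  have h4 := h3.const_mul ε
  have h5 : HasDerivAt (fun z => PhixF ε u (t, z)) (PsiF ε u (t, x)) x :=
    hasDerivAt_slice2
      ((Phix_smooth hsol (show 0 < u (t,x).1 (t,x).2 from hsol.u_pos t x ht)).differentiableAt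
        (by simp))
  have heq : (fun z => PhixF ε u (t, z)) =
      fun z => ε * (deriv (fun z' => u t z') z / u t z) :=
    funext fun z => Phix_val hsol ht
  rw [heq] at h5
  exact h5.unique h4

/-- Hopf–Cole: `p = ε φ_xx + φ_x² + v - μ` for `t ≥ 0`. -/
lemma phi_eq (hsol : IsPDESol μ ε u v) (hε : 0 < ε) {t x : ℝ} (ht : 0 ≤ t) :
    PF ε u (t, x) = ε * PsiF ε u (t, x) + (PhixF ε u (t, x)) ^ 2 + v t x - μ := by
  rw [PF_val hsol ht, Psi_val hsol ht, Phix_val hsol ht]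
  have hu := (hsol.u_pos t x ht).ne'
  field_simp
  ring

lemma pd_pd {f : ℝ × ℝ → ℝ} {q : ℝ × ℝ} (hf : ContDiffAt ℝ (⊤ : ℕ∞) f q) (w₁ w₂ : ℝ × ℝ) :
    fderiv ℝ (fun z => fderiv ℝ f z w₂) q w₁ = fderiv ℝ (fderiv ℝ f) q w₁ w₂ := by
  have hd : DifferentiableAt ℝ (fderiv ℝ f) q :=
    (hf.fderiv_right (m := 1) (WithTop.coe_le_coe.2 (le_top : (1 + 1 : ℕ∞) ≤ ⊤))).differentiableAt one_ne_zero
  rw [fderiv_clm_apply hd (differentiableAt_const w₂)]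
  simp

lemma pd_comm {f : ℝ × ℝ → ℝ} {q : ℝ × ℝ} (hf : ContDiffAt ℝ (⊤ : ℕ∞) f q) (w₁ w₂ : ℝ × ℝ) :
    fderiv ℝ (fun z => fderiv ℝ f z w₂) q w₁ = fderiv ℝ (fun z => fderiv ℝ f z w₁) q w₂ := by
  rw [pd_pd hf w₁ w₂, pd_pd hf w₂ w₁]
  exact (hf.isSymmSndFDerivAt (by rw [minSmoothness_of_isRCLikeNormedField]; exact WithTop.coe_le_coe.2 (le_top : (2:ℕ∞) ≤ ⊤))) w₁ w₂

/-- The parabolic equation satisfied by `p = ∂ₜφ` at interior times. -/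
lemma P_PDE (hsol : IsPDESol μ ε u v) (hε : 0 < ε) {t x : ℝ} (ht : 0 < t) :
    fderiv ℝ (PF ε u) (t, x) (1, 0) =
      ε * fderiv ℝ (PxF ε u) (t, x) (0, 1) + 2 * PhixF ε u (t, x) * PxF ε u (t, x)
        - u t x * v t x := by
  have hq : 0 < u (t, x).1 (t, x).2 := hsol.u_pos t x ht.le
  have hΦ := Phi_smooth hsol hq
  have hPsm := P_smooth hsol hq
  have hΦxsm := Phix_smooth hsol hq
  have hΨsm : ContDiffAt ℝ (⊤ : ℕ∞) (PsiF ε u) (t, x) := contDiffAt_pd hΦxsm _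
  have hP1 : HasDerivAt (fun s => PF ε u (s, x)) (fderiv ℝ (PF ε u) (t, x) (1, 0)) t :=
    hasDerivAt_slice1 (hPsm.differentiableAt (by simp))
  have hΨ1 : HasDerivAt (fun s => PsiF ε u (s, x)) (fderiv ℝ (PsiF ε u) (t, x) (1, 0)) t :=
    hasDerivAt_slice1 (hΨsm.differentiableAt (by simp))
  have hΦx1 : HasDerivAt (fun s => PhixF ε u (s, x)) (fderiv ℝ (PhixF ε u) (t, x) (1, 0)) t :=
    hasDerivAt_slice1 (hΦxsm.differentiableAt (by simp))
  have hv1 := hsol.v_eq t x ht.le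
  have hR := (((hΨ1.const_mul ε).add (hΦx1.pow 2)).add hv1).sub_const μ
  have hev : (fun s => ε * PsiF ε u (s, x) + PhixF ε u (s, x) ^ 2 + v s x - μ)
      =ᶠ[𝓝 t] (fun s => PF ε u (s, x)) := by
    filter_upwards [eventually_gt_nhds ht] with s hs
    exact (phi_eq hsol hε hs.le).symm
  have key := hP1.unique (hR.congr_of_eventuallyEq hev.symm)
  have hUopen : IsOpen {z : ℝ × ℝ | 0 < u z.1 z.2} :=
    isOpen_lt continuous_const hsol.u_smooth.continuous
  have comm1 : fderiv ℝ (PhixF ε u) (t, x) ((1:ℝ), (0:ℝ)) = PxF ε u (t, x) :=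
    pd_comm hΦ (1, 0) (0, 1)
  have hev2 : (fun z => fderiv ℝ (PhixF ε u) z ((1:ℝ), (0:ℝ))) =ᶠ[𝓝 ((t:ℝ), x)] PxF ε u := by
    filter_upwards [hUopen.mem_nhds hq] with z hz
    exact pd_comm (Phi_smooth hsol hz) (1, 0) (0, 1)
  have comm2 : fderiv ℝ (PsiF ε u) (t, x) ((1:ℝ), (0:ℝ)) =
      fderiv ℝ (PxF ε u) (t, x) (0, 1) := by
    have h1 : fderiv ℝ (PsiF ε u) (t, x) ((1:ℝ), (0:ℝ)) =
        fderiv ℝ (fun z => fderiv ℝ (PhixF ε u) z ((1:ℝ), (0:ℝ))) (t, x) (0, 1) :=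
      pd_comm hΦxsm (1, 0) (0, 1)
    rw [h1, hev2.fderiv_eq]
  rw [key, comm1, comm2]
  push_cast
  ring

lemma final_arith (ε M δ E z A Y X b W : ℝ) (hε : 0 < ε) (hM0 : 0 ≤ M) (hδ : 0 < δ)
    (hE : 1 ≤ E) (hW : 0 < W) (hb : |b| ≤ M)
    (htder : 0 ≤ A - δ * (E * (2 * ε + 2 * M + 1)) * (1 + z ^ 2))
    (hPDE : A = ε * Y + 2 * b * X - W)
    (hsec2 : Y - δ * E * 2 ≤ 0)
    (hPx : X = δ * E * 2 * z) : False := by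
  have hEpos : (0:ℝ) < E := lt_of_lt_of_le one_pos hE
  have p1 : (0:ℝ) < δ * E := mul_pos hδ hEpos
  have s3 : b * z ≤ M * |z| :=
    le_trans (le_abs_self _) (by rw [abs_mul]; exact mul_le_mul_of_nonneg_right hb (abs_nonneg _))
  have s5 : 2 * |z| ≤ 1 + z ^ 2 := by nlinarith [sq_nonneg (|z| - 1), sq_abs z]
  rw [hPDE, hPx] at htder
  nlinarith [mul_le_mul_of_nonneg_left s3 (by positivity : (0:ℝ) ≤ 4 * (δ * E)),
    mul_le_mul_of_nonneg_left s5 (by positivity : (0:ℝ) ≤ 2 * (δ * E) * M),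
    mul_le_mul_of_nonneg_left (show Y ≤ δ * E * 2 by linarith) hε.le,
    mul_nonneg (mul_nonneg p1.le hε.le) (sq_nonneg z), p1, hW]

/-- Estimate (18) of Lemma 3.2: the maximum principle for `p = ∂ₜφ`, where
`φ = ε ln u`: for `t ∈ [0,T]`, `∂ₜφ(t,x) ≤ sup_y ∂ₜφ(0,y)`. -/
theorem dt_phi_max_principle (μ ε T : ℝ) (hμ : 0 < μ) (hε : 0 < ε) (hT : 0 < T)
    (u v : ℝ → ℝ → ℝ) (hsol : IsPDESol μ ε u v)
    -- `φ` is C¹ in `t` and C² in `x`: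
    (hφt : ∀ x, ContDiffOn ℝ 1 (fun t => ε * Real.log (u t x)) (Set.Ici 0))
    (hφx : ∀ t, 0 ≤ t → ContDiff ℝ 2 (fun x => ε * Real.log (u t x)))
    -- `p = ∂ₜφ` is itself C¹ in `t` and C² in `x`:
    (hpt : ∀ x, ContDiffOn ℝ 1
      (fun t => deriv (fun s => ε * Real.log (u s x)) t) (Set.Ici 0))
    (hpx : ∀ t, 0 ≤ t → ContDiff ℝ 2
      (fun x => deriv (fun s => ε * Real.log (u s x)) t))
    -- `p` and `∂ₓφ` are bounded on `[0,T] × ℝ`: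
    (M : ℝ)
    (hbd : ∀ t x, t ∈ Set.Icc (0:ℝ) T →
      |deriv (fun s => ε * Real.log (u s x)) t| ≤ M ∧
      |deriv (fun z => ε * Real.log (u t z)) x| ≤ M) :
    ∀ t x, t ∈ Set.Icc (0:ℝ) T →
      deriv (fun s => ε * Real.log (u s x)) t ≤
        ⨆ y : ℝ, deriv (fun s => ε * Real.log (u s y)) 0 := by
  intro t₀ x₀ ht₀
  have hp : ∀ t x, 0 ≤ t → deriv (fun s => ε * Real.log (u s x)) t = PF ε u (t, x) :=
    fun t x ht => (hasDerivAt_PF hsol ht).deriv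
  have hφxid : ∀ t x, 0 ≤ t → deriv (fun z => ε * Real.log (u t z)) x = PhixF ε u (t, x) :=
    fun t x ht => (hasDerivAt_PhixF hsol ht).deriv
  set S := ⨆ y : ℝ, deriv (fun s => ε * Real.log (u s y)) 0 with hS
  rw [hp t₀ x₀ ht₀.1]
  have hM0 : 0 ≤ M := le_trans (abs_nonneg _) (hbd 0 0 ⟨le_rfl, hT.le⟩).1
  have hPbd : ∀ t x, t ∈ Set.Icc (0:ℝ) T → |PF ε u (t, x)| ≤ M := fun t x ht => by
    rw [← hp t x ht.1]; exact (hbd t x ht).1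
  have hΦxbd : ∀ t x, t ∈ Set.Icc (0:ℝ) T → |PhixF ε u (t, x)| ≤ M := fun t x ht => by
    rw [← hφxid t x ht.1]; exact (hbd t x ht).2
  have hbdd : BddAbove (Set.range fun y => deriv (fun s => ε * Real.log (u s y)) 0) := by
    refine ⟨M, ?_⟩
    rintro _ ⟨y, rfl⟩
    exact le_trans (le_abs_self _) (hbd 0 y ⟨le_rfl, hT.le⟩).1
  have hS0 : ∀ y, PF ε u (0, y) ≤ S := fun y => by
    rw [← hp 0 y le_rfl]; exact le_ciSup hbdd y
  have hSlb : -M ≤ S := by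
    refine le_trans ?_ (le_ciSup hbdd 0)
    exact neg_le_of_abs_le (by simpa using (hbd 0 0 ⟨le_rfl, hT.le⟩).1)
  set K := 2 * ε + 2 * M + 1 with hK
  have hKpos : 0 < K := by positivity
  have main : ∀ δ : ℝ, 0 < δ → PF ε u (t₀, x₀) ≤ S + δ * Real.exp (K * T) := by
    intro δ hδ
    set R := max (Real.sqrt (2 * M / δ)) 1 with hR
    have hR1 : (1:ℝ) ≤ R := le_max_right _ _
    have hRpos : (0:ℝ) < R := lt_of_lt_of_le one_pos hR1
    have hR2 : 2 * M ≤ δ * R ^ 2 := by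
      have h1 : Real.sqrt (2 * M / δ) ≤ R := le_max_left _ _
      have h2 : Real.sqrt (2 * M / δ) ^ 2 = 2 * M / δ := Real.sq_sqrt (by positivity)
      have h3 : 2 * M / δ ≤ R ^ 2 := by nlinarith [Real.sqrt_nonneg (2 * M / δ)]
      rw [div_le_iff₀ hδ] at h3
      linarith
    have hRectC : IsCompact (Set.Icc (0:ℝ) T ×ˢ Set.Icc (x₀ - R) (x₀ + R)) :=
      isCompact_Icc.prod isCompact_Icc
    have hmem₀ : (t₀, x₀) ∈ Set.Icc (0:ℝ) T ×ˢ Set.Icc (x₀ - R) (x₀ + R) := by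
      refine ⟨ht₀, ?_, ?_⟩ <;> simp <;> linarith
    have hwcont : ContinuousOn
        (fun q : ℝ × ℝ => PF ε u q - S - δ * Real.exp (K * q.1) * (1 + (q.2 - x₀) ^ 2))
        (Set.Icc (0:ℝ) T ×ˢ Set.Icc (x₀ - R) (x₀ + R)) := by
      refine ContinuousOn.sub (ContinuousOn.sub ?_ continuousOn_const) ?_
      · intro q hq
        exact ((P_smooth hsol (hsol.u_pos q.1 q.2 hq.1.1)).continuousAt.continuousWithinAt)
      · fun_prop
    obtain ⟨⟨ts, xs⟩, hqmem, hqmax⟩ := hRectC.exists_isMaxOn ⟨_, hmem₀⟩ hwcont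
    have hmax : ∀ s y, (s, y) ∈ Set.Icc (0:ℝ) T ×ˢ Set.Icc (x₀ - R) (x₀ + R) →
        PF ε u (s, y) - S - δ * Real.exp (K * s) * (1 + (y - x₀) ^ 2) ≤
        PF ε u (ts, xs) - S - δ * Real.exp (K * ts) * (1 + (xs - x₀) ^ 2) :=
      fun s y h => hqmax h
    have hts : ts ∈ Set.Icc (0:ℝ) T := hqmem.1
    have hxs : xs ∈ Set.Icc (x₀ - R) (x₀ + R) := hqmem.2
    have hw0 : PF ε u (ts, xs) - S - δ * Real.exp (K * ts) * (1 + (xs - x₀) ^ 2) ≤ 0 := by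
      by_contra hwpos
      push_neg at hwpos
      have hts0 : 0 < ts := by
        rcases eq_or_lt_of_le hts.1 with h0 | h0
        · exfalso
          have h1 := hS0 xs
          rw [← h0] at hwpos
          have h2 : (0:ℝ) < δ * Real.exp (K * 0) * (1 + (xs - x₀) ^ 2) := by positivity
          linarith
        · exact h0
      have he1 : (1:ℝ) ≤ Real.exp (K * ts) := Real.one_le_exp (by positivity)
      have hepos : (0:ℝ) < Real.exp (K * ts) := Real.exp_pos _
      have hendpoint : (xs - x₀) ^ 2 = R ^ 2 → False := by
        intro hsq
        have h1 : PF ε u (ts, xs) ≤ M := le_trans (le_abs_self _) (hPbd ts xs hts)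
        have h2 : δ * (1 + R ^ 2) ≤ δ * Real.exp (K * ts) * (1 + (xs - x₀) ^ 2) := by
          rw [hsq]
          nlinarith [sq_nonneg R]
        linarith
      have hx1 : x₀ - R < xs := by
        rcases eq_or_lt_of_le hxs.1 with h0 | h0
        · exact absurd (by rw [← h0]; ring) hendpoint
        · exact h0
      have hx2 : xs < x₀ + R := by
        rcases eq_or_lt_of_le hxs.2 with h0 | h0
        · exact absurd (by rw [h0]; ring) hendpoint
        · exact h0
      have hupos : 0 < u (ts, xs).1 (ts, xs).2 := hsol.u_pos ts xs hts.1
      have hPsm := P_smooth hsol hupos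
      have hPxsm : ContDiffAt ℝ (⊤ : ℕ∞) (PxF ε u) (ts, xs) := contDiffAt_pd hPsm (0, 1)
      -- time direction derivative sign
      have hgK : HasDerivAt (fun s : ℝ => K * s) K ts := by
        simpa using (hasDerivAt_id ts).const_mul K
      have hBt : HasDerivAt (fun s : ℝ => δ * Real.exp (K * s) * (1 + (xs - x₀) ^ 2))
          (δ * (Real.exp (K * ts) * K) * (1 + (xs - x₀) ^ 2)) ts :=
        (((Real.hasDerivAt_exp (K * ts)).comp ts hgK).const_mul δ).mul_const _
      have hPts : HasDerivAt (fun s => PF ε u (s, xs))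
          (fderiv ℝ (PF ε u) (ts, xs) ((1:ℝ), (0:ℝ))) ts :=
        hasDerivAt_slice1 (hPsm.differentiableAt (by simp))
      have hgw : HasDerivAt
          (fun s => PF ε u (s, xs) - S - δ * Real.exp (K * s) * (1 + (xs - x₀) ^ 2))
          (fderiv ℝ (PF ε u) (ts, xs) ((1:ℝ), (0:ℝ))
            - δ * (Real.exp (K * ts) * K) * (1 + (xs - x₀) ^ 2)) ts :=
        (hPts.sub_const S).sub hBt
      have hleft : ∀ᶠ s in 𝓝[<] ts,
          (fun s => PF ε u (s, xs) - S - δ * Real.exp (K * s) * (1 + (xs - x₀) ^ 2)) s ≤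
          (fun s => PF ε u (s, xs) - S - δ * Real.exp (K * s) * (1 + (xs - x₀) ^ 2)) ts := by
        filter_upwards [Ioo_mem_nhdsLT_of_mem (Set.right_mem_Ioc.2 hts0)] with s hs
        exact hmax s xs ⟨⟨hs.1.le, hs.2.le.trans hts.2⟩, hxs⟩
      have htder : 0 ≤ fderiv ℝ (PF ε u) (ts, xs) ((1:ℝ), (0:ℝ))
          - δ * (Real.exp (K * ts) * K) * (1 + (xs - x₀) ^ 2) :=
        deriv_nonneg_of_left_max hgw hleft
      -- space direction: local max
      have hlocmax : IsLocalMax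
          (fun y => PF ε u (ts, y) - S - δ * Real.exp (K * ts) * (1 + (y - x₀) ^ 2)) xs := by
        filter_upwards [isOpen_Ioo.eventually_mem
          (⟨hx1, hx2⟩ : xs ∈ Set.Ioo (x₀ - R) (x₀ + R))] with y hy
        exact hmax ts y ⟨hts, hy.1.le, hy.2.le⟩
      have hxslice : ∀ y : ℝ, HasDerivAt
          (fun y' => PF ε u (ts, y') - S - δ * Real.exp (K * ts) * (1 + (y' - x₀) ^ 2))
          (PxF ε u (ts, y) - δ * Real.exp (K * ts) * 2 * (y - x₀)) y := by
        intro y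
        have hP2 : HasDerivAt (fun y' => PF ε u (ts, y')) (PxF ε u (ts, y)) y :=
          hasDerivAt_slice2 ((P_smooth hsol (hsol.u_pos ts y hts.1)).differentiableAt (by simp))
        have hB2 : HasDerivAt (fun y' : ℝ => δ * Real.exp (K * ts) * (1 + (y' - x₀) ^ 2))
            (δ * Real.exp (K * ts) * 2 * (y - x₀)) y := by
          have h := ((((hasDerivAt_id y).sub_const x₀).fun_pow 2).const_add 1).const_mul
            (δ * Real.exp (K * ts))
          refine h.congr_deriv ?_
          norm_num
          ring
        exact (hP2.sub_const S).sub hB2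
      have hPxeq : PxF ε u (ts, xs) = δ * Real.exp (K * ts) * 2 * (xs - x₀) := by
        have h0 := hlocmax.deriv_eq_zero
        rw [(hxslice xs).deriv] at h0
        linarith
      have hderiv_eq : deriv
          (fun y' => PF ε u (ts, y') - S - δ * Real.exp (K * ts) * (1 + (y' - x₀) ^ 2))
          = fun y => PxF ε u (ts, y) - δ * Real.exp (K * ts) * 2 * (y - x₀) :=
        funext fun y => (hxslice y).deriv
      have hPxslice : HasDerivAt (fun y => PxF ε u (ts, y))
          (fderiv ℝ (PxF ε u) (ts, xs) ((0:ℝ), (1:ℝ))) xs :=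
        hasDerivAt_slice2 (hPxsm.differentiableAt (by simp))
      have hlin : HasDerivAt (fun y : ℝ => δ * Real.exp (K * ts) * 2 * (y - x₀))
          (δ * Real.exp (K * ts) * 2) xs := by
        simpa using ((hasDerivAt_id xs).sub_const x₀).const_mul (δ * Real.exp (K * ts) * 2)
      have hsec : deriv (deriv
          (fun y' => PF ε u (ts, y') - S - δ * Real.exp (K * ts) * (1 + (y' - x₀) ^ 2))) xs ≤ 0 := by
        refine deriv2_nonpos_of_localMax ?_ hlocmax
        have hPcomp : ContDiffAt ℝ (⊤ : ℕ∞) (fun y => PF ε u (ts, y)) xs :=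
          (P_smooth hsol hupos).comp xs ((contDiff_const.prodMk contDiff_id).contDiffAt)
        have hBc : ContDiff ℝ (⊤ : ℕ∞) (fun y' : ℝ => δ * Real.exp (K * ts) * (1 + (y' - x₀) ^ 2)) := by
          fun_prop
        exact (hPcomp.sub contDiffAt_const).sub hBc.contDiffAt
      rw [hderiv_eq] at hsec
      have hsec2 : fderiv ℝ (PxF ε u) (ts, xs) ((0:ℝ), (1:ℝ)) - δ * Real.exp (K * ts) * 2 ≤ 0 := by
        rw [← (hPxslice.sub hlin).deriv]
        exact hsec
      -- PDE and contradiction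
      have hPDE := P_PDE (v := v) hsol hε (x := xs) hts0
      have huv : 0 < u ts xs * v ts xs :=
        mul_pos (hsol.u_pos ts xs hts.1) (hsol.v_pos ts xs hts.1)
      have habs : |PhixF ε u (ts, xs)| ≤ M := hΦxbd ts xs hts
      have hb := abs_le.1 habs
      rw [hK] at htder
      exact final_arith ε M δ (Real.exp (K * ts)) (xs - x₀)
        (fderiv ℝ (PF ε u) (ts, xs) ((1:ℝ), (0:ℝ)))
        (fderiv ℝ (PxF ε u) (ts, xs) ((0:ℝ), (1:ℝ)))
        (PxF ε u (ts, xs)) (PhixF ε u (ts, xs)) (u ts xs * v ts xs)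
        hε hM0 hδ he1 huv habs htder hPDE hsec2 hPxeq

    have h1 := hmax t₀ x₀ hmem₀
    have hexp : Real.exp (K * t₀) ≤ Real.exp (K * T) :=
      Real.exp_le_exp.2 (mul_le_mul_of_nonneg_left ht₀.2 hKpos.le)
    have hexp0 : (0:ℝ) < Real.exp (K * t₀) := Real.exp_pos _
    have hz0 : ((x₀ - x₀ : ℝ)) ^ 2 = 0 := by ring
    rw [hz0] at h1
    nlinarith [mul_le_mul_of_nonneg_left hexp hδ.le]

  by_contra hcon
  push_neg at hcon
  have hc : 0 < PF ε u (t₀, x₀) - S := by linarith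
  have he : (0:ℝ) < Real.exp (K * T) := Real.exp_pos _
  have h2 := main ((PF ε u (t₀, x₀) - S) / (2 * Real.exp (K * T))) (by positivity)
  have h3 : (PF ε u (t₀, x₀) - S) / (2 * Real.exp (K * T)) * Real.exp (K * T)
      = (PF ε u (t₀, x₀) - S) / 2 := by field_simp
  rw [h3] at h2
  linarith
end

section
/- Let ε ∈ (0,1), L > 0, A > 0, and let φ : ℝ → ℝ be Lipschitz with Lipschitz constant L, satisfying ∫_ℝ exp(φ(x)/ε) dx ≤ A/ε. Then sup_{x ∈ ℝ} φ(x) ≤ 2 ε ln(1/ε) + ε ln(A L / 2). -/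
open Real MeasureTheory


lemma integrable_exp_neg_abs : Integrable (fun x : ℝ => Real.exp (-|x|)) := by
  have h1 : IntegrableOn (fun x : ℝ => Real.exp (-|x|)) (Set.Iic 0) := by
    apply (integrableOn_exp_Iic 0).congr_fun ?_ measurableSet_Iic
    intro x hx
    simp only [Set.mem_Iic] at hx
    simp [abs_of_nonpos hx]
  have h2 : IntegrableOn (fun x : ℝ => Real.exp (-|x|)) (Set.Ioi 0) := by
    apply (exp_neg_integrableOn_Ioi 0 one_pos).congr_fun ?_ measurableSet_Ioi
    intro x hx
    simp only [Set.mem_Ioi] at hx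
    simp [abs_of_pos hx]
  have := h1.union h2
  rwa [Set.Iic_union_Ioi, integrableOn_univ] at this

lemma integral_exp_neg_abs : ∫ x : ℝ, Real.exp (-|x|) = 2 := by
  rw [← intervalIntegral.integral_Iic_add_Ioi (b := (0:ℝ)) integrable_exp_neg_abs.integrableOn
    integrable_exp_neg_abs.integrableOn]
  have h1 : ∫ x in Set.Iic (0:ℝ), Real.exp (-|x|) = 1 := by
    rw [MeasureTheory.setIntegral_congr_fun measurableSet_Iic
      (fun x hx => by simp only [Set.mem_Iic] at hx; rw [abs_of_nonpos hx, neg_neg] :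
        Set.EqOn _ (fun x => Real.exp x) _)]
    simpa using integral_exp_Iic 0
  have h2 : ∫ x in Set.Ioi (0:ℝ), Real.exp (-|x|) = 1 := by
    rw [MeasureTheory.setIntegral_congr_fun measurableSet_Ioi
      (fun x hx => by simp only [Set.mem_Ioi] at hx; rw [abs_of_pos hx] :
        Set.EqOn _ (fun x => Real.exp (-x)) _)]
    simpa using integral_exp_neg_Ioi 0
  rw [h1, h2]; norm_num

/-- Key step in the upper bound (20) of Lemma 3.2: a Lipschitz function `φ` with
`∫ exp(φ/ε) ≤ A/ε` satisfies `sup φ ≤ 2ε ln(1/ε) + ε ln(AL/2)`. -/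
theorem lipschitz_exp_integral_bound (ε L A : ℝ) (hε : 0 < ε) (hε1 : ε < 1)
    (hL : 0 < L) (hA : 0 < A) (φ : ℝ → ℝ)
    (hlip : LipschitzWith (Real.toNNReal L) φ)
    (hint : ∫⁻ x, ENNReal.ofReal (Real.exp (φ x / ε)) ≤ ENNReal.ofReal (A / ε)) :
    ∀ x, φ x ≤ 2 * ε * Real.log (1 / ε) + ε * Real.log (A * L / 2) := by
  intro x₀
  set M := φ x₀ with hM
  set c := L / ε with hc
  have hcpos : 0 < c := div_pos hL hε
  set f : ℝ → ℝ := fun x => Real.exp (M / ε) * Real.exp (-|c * (x - x₀)|) with hf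
  have hfi : Integrable f := by
    have := (integrable_exp_neg_abs.comp_mul_left' hcpos.ne').comp_sub_right x₀
    exact this.const_mul _
  have hfint : ∫ x, f x = Real.exp (M / ε) * (2 / c) := by
    rw [hf, MeasureTheory.integral_const_mul]
    congr 1
    have h1 : (∫ x : ℝ, Real.exp (-|c * (x - x₀)|)) = ∫ x : ℝ, Real.exp (-|c * x|) :=
      integral_sub_right_eq_self (fun x => Real.exp (-|c * x|)) x₀
    rw [h1]
    have h2 := MeasureTheory.Measure.integral_comp_mul_left (fun y : ℝ => Real.exp (-|y|)) c
    rw [h2, integral_exp_neg_abs, abs_of_pos (inv_pos.mpr hcpos), smul_eq_mul]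
    ring
  -- pointwise bound
  have hle : ∀ x, f x ≤ Real.exp (φ x / ε) := by
    intro x
    show Real.exp (M / ε) * Real.exp (-|c * (x - x₀)|) ≤ Real.exp (φ x / ε)
    rw [← Real.exp_add]
    apply Real.exp_le_exp.mpr
    have hd := hlip.dist_le_mul x₀ x
    rw [Real.coe_toNNReal L hL.le, Real.dist_eq, Real.dist_eq] at hd
    have h3 : M - L * |x₀ - x| ≤ φ x := by
      have := abs_sub_abs_le_abs_sub (φ x₀) (φ x)
      have h4 : φ x₀ - φ x ≤ |φ x₀ - φ x| := le_abs_self _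
      linarith [hd, h4]
    have habs : |c * (x - x₀)| = c * |x₀ - x| := by
      rw [abs_mul, abs_of_pos hcpos, abs_sub_comm]
    rw [habs]
    have heq2 : M / ε + -(c * |x₀ - x|) = (M - L * |x₀ - x|) / ε := by
      rw [hc]; field_simp; ring
    rw [heq2]
    gcongr
  have key : ∫ x, f x ≤ A / ε := by
    have h5 : ENNReal.ofReal (∫ x, f x) ≤ ENNReal.ofReal (A / ε) := by
      rw [MeasureTheory.ofReal_integral_eq_lintegral_ofReal hfi
        (Filter.Eventually.of_forall fun x => by positivity)]
      exact le_trans (lintegral_mono fun x => ENNReal.ofReal_le_ofReal (hle x)) hint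
    exact (ENNReal.ofReal_le_ofReal_iff (by positivity)).mp h5
  rw [hfint] at key
  have hexp : Real.exp (M / ε) ≤ A * L / (2 * ε ^ 2) := by
    rw [hc, div_div_eq_mul_div] at key
    have h6 := (le_div_iff₀ (by positivity : (0:ℝ) < 2 * ε / L)).mpr key
    have h7 : A / ε / (2 * ε / L) = A * L / (2 * ε ^ 2) := by field_simp
    rwa [h7] at h6
  have hlog : M / ε ≤ Real.log (A * L / (2 * ε ^ 2)) :=
    (Real.le_log_iff_exp_le (by positivity)).mpr hexp
  have heq : Real.log (A * L / (2 * ε ^ 2)) =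
      2 * Real.log (1 / ε) + Real.log (A * L / 2) := by
    rw [show A * L / (2 * ε ^ 2) = (A * L / 2) * (1 / ε) ^ 2 by field_simp,
      Real.log_mul (by positivity) (by positivity), Real.log_pow]
    push_cast; ring
  have := (div_le_iff₀' hε).mp hlog
  rw [heq] at this
  calc M ≤ ε * (2 * Real.log (1 / ε) + Real.log (A * L / 2)) := this
    _ = 2 * ε * Real.log (1 / ε) + ε * Real.log (A * L / 2) := by ring
end
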